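/- arXiv:2104.05920 — 4 statements merged into one kernel-verified Lean document; each statement's English description precedes it below -/
import Mathlib

section
/- If f(z) = Σ_{n≥0} a_n z^n is analytic on the unit disk with |f(z)| ≤ 1 for all |z| < 1, then for every r with 0 ≤ r ≤ 1/3, the inequality Σ_{n≥0} |a_n| r^n ≤ 1 holds. -/
/-!
Wiener's inequality `‖a n‖ ≤ 1 - ‖a 0‖ ^ 2` for `n ≥ 1` gives
`∑ ‖a n‖ rⁿ ≤ t + (1 - t²) r / (1 - r) ≤ t + (1 - t²) / 2 ≤ 1` with `t = ‖a 0‖` and `r ≤ 1/3`.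
For `n = 1` Wiener's inequality is the Schwarz–Pick estimate at `0`: the Schwarz lemma applied to
`f` followed by the disk automorphism `w ↦ (w - a₀) / (1 - conj a₀ w)`. For general `n`, averaging
`f` over the rotations `z ↦ ωʲ z` by the `n`-th roots of unity keeps exactly the terms with
`n ∣ k`, so `w ↦ ∑ₘ a (n m) wᵐ` is again bounded by `1`, and its coefficients `0` and `1` are
`a 0` and `a n`.
-/

open Metric Complex Finset Set ComplexConjugate Topology

noncomputable def blaschke (c w : ℂ) : ℂ := (w - c) / (1 - conj c * w)

theorem sq_norm_one_sub_conj_mul_sub_sq_norm_sub (c w : ℂ) :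
    ‖1 - conj c * w‖ ^ 2 - ‖w - c‖ ^ 2 = (1 - ‖c‖ ^ 2) * (1 - ‖w‖ ^ 2) := by
  simp only [Complex.sq_norm, Complex.normSq_apply, sub_re, sub_im, mul_re, mul_im, conj_re,
    conj_im, one_re, one_im]
  ring

theorem one_sub_conj_mul_ne_zero {c w : ℂ} (hc : ‖c‖ < 1) (hw : ‖w‖ ≤ 1) :
    1 - conj c * w ≠ 0 := by
  refine sub_ne_zero.mpr fun h => ?_
  have : ‖conj c * w‖ < 1 := by
    rw [norm_mul, RCLike.norm_conj]
    nlinarith [norm_nonneg c, norm_nonneg w]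
  simp [← h] at this

theorem norm_blaschke_le_one {c w : ℂ} (hc : ‖c‖ < 1) (hw : ‖w‖ ≤ 1) : ‖blaschke c w‖ ≤ 1 := by
  have hden := norm_pos_iff.mpr (one_sub_conj_mul_ne_zero hc hw)
  rw [blaschke, norm_div, div_le_one hden]
  refine (pow_le_pow_iff_left₀ (norm_nonneg _) (norm_nonneg _) two_ne_zero).mp ?_
  have : 0 ≤ (1 - ‖c‖ ^ 2) * (1 - ‖w‖ ^ 2) := by
    apply mul_nonneg <;> nlinarith [norm_nonneg c, norm_nonneg w]
  linarith [sq_norm_one_sub_conj_mul_sub_sq_norm_sub c w]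

theorem blaschke_self (c : ℂ) : blaschke c c = 0 := by simp [blaschke]

theorem hasDerivAt_blaschke_self {c : ℂ} (hc : ‖c‖ < 1) :
    HasDerivAt (blaschke c) (1 - ‖c‖ ^ 2 : ℂ)⁻¹ c := by
  have hden := one_sub_conj_mul_ne_zero hc hc.le
  have hcc : conj c * c = (‖c‖ ^ 2 : ℂ) := by
    rw [mul_comm, Complex.mul_conj, Complex.normSq_eq_norm_sq, ofReal_pow]
  rw [hcc] at hden
  refine (((hasDerivAt_id' c).sub_const c).div
    (((hasDerivAt_id' c).const_mul (conj c)).const_sub 1) ?_).congr_deriv ?_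
  · rwa [hcc]
  · rw [hcc]
    field_simp
    ring

theorem differentiableAt_blaschke {c w : ℂ} (hc : ‖c‖ < 1) (hw : ‖w‖ ≤ 1) :
    DifferentiableAt ℂ (blaschke c) w := by
  unfold blaschke
  fun_prop (disch := exact one_sub_conj_mul_ne_zero hc hw)

theorem norm_deriv_le_one_sub_sq_norm_of_mapsTo_ball {h : ℂ → ℂ}
    (hd : DifferentiableOn ℂ h (ball 0 1)) (hmaps : MapsTo h (ball 0 1) (closedBall 0 1)) :
    ‖deriv h 0‖ ≤ 1 - ‖h 0‖ ^ 2 := by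
  have h0 : (0 : ℂ) ∈ ball (0 : ℂ) 1 := mem_ball_self one_pos
  have hnorm : ∀ w ∈ ball (0 : ℂ) 1, ‖h w‖ ≤ 1 := fun w hw => mem_closedBall_zero_iff.mp (hmaps hw)
  rcases (hnorm 0 h0).eq_or_lt with hc | hc
  · have hmax : IsMaxOn (norm ∘ h) (ball 0 1) 0 := fun w hw => by
      simpa [hc] using hnorm w hw
    have hconst : h =ᶠ[𝓝 0] fun _ => h 0 :=
      Filter.eventuallyEq_of_mem (isOpen_ball.mem_nhds h0) <|
        eqOn_of_isPreconnected_of_isMaxOn_norm (convex_ball 0 1).isPreconnected isOpen_ball hd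
          h0 hmax
    simp [hconst.deriv_eq, hc]
  · set c := h 0
    have hderiv : HasDerivAt (blaschke c ∘ h) ((1 - ‖c‖ ^ 2 : ℂ)⁻¹ * deriv h 0) 0 :=
      (hasDerivAt_blaschke_self hc).comp 0
        (hd.differentiableAt (isOpen_ball.mem_nhds h0)).hasDerivAt
    have hschwarz : ‖deriv (blaschke c ∘ h) 0‖ ≤ 1 := by
      refine norm_deriv_le_one_of_mapsTo_ball (fun w hw => ?_) (fun w hw => ?_) one_pos
      · exact ((differentiableAt_blaschke hc (hnorm w hw)).comp w
          (hd.differentiableAt (isOpen_ball.mem_nhds hw))).differentiableWithinAt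
      · simpa [c, blaschke_self] using norm_blaschke_le_one hc (hnorm w hw)
    have hpos : 0 < 1 - ‖c‖ ^ 2 := by nlinarith [norm_nonneg c]
    rw [hderiv.deriv, norm_mul, norm_inv, ← ofReal_pow, ← ofReal_one, ← ofReal_sub,
      norm_real, Real.norm_of_nonneg hpos.le, inv_mul_le_iff₀ hpos, mul_one] at hschwarz
    exact hschwarz

theorem hasFPowerSeriesOnBall_ofScalars_of_hasSum {𝕜 : Type*} [RCLike 𝕜] {b : ℕ → 𝕜}
    {g : 𝕜 → 𝕜} {R : NNReal} (hR : 0 < R)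
    (hg : ∀ w : 𝕜, ‖w‖ < R → HasSum (fun m => b m * w ^ m) (g w)) :
    HasFPowerSeriesOnBall g (FormalMultilinearSeries.ofScalars 𝕜 b) 0 R := by
  set P := FormalMultilinearSeries.ofScalars 𝕜 b
  have hrad : (R : ENNReal) ≤ P.radius := by
    refine ENNReal.le_of_forall_nnreal_lt fun s hs => P.le_radius_of_tendsto (l := 0) ?_
    have hs' : ‖((s : ℝ) : 𝕜)‖ < R := by simpa using hs
    simpa [P, FormalMultilinearSeries.ofScalars_norm] using
      (hg _ hs').summable.tendsto_atTop_zero.norm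
  refine ((P.hasFPowerSeriesOnBall ((ENNReal.coe_pos.mpr hR).trans_le hrad)).mono
    (ENNReal.coe_pos.mpr hR) hrad).congr fun w hw => ?_
  refine (P.hasSum (eball_subset_eball hrad hw)).unique ?_
  simpa only [P, FormalMultilinearSeries.ofScalars_apply_eq, smul_eq_mul, zero_add] using
    hg w (by simpa using hw)

theorem norm_coeff_one_le_one_sub_sq_norm_coeff_zero {b : ℕ → ℂ}
    (hb : ∀ w : ℂ, ‖w‖ < 1 → ∃ s, HasSum (fun m => b m * w ^ m) s ∧ ‖s‖ ≤ 1) :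
    ‖b 1‖ ≤ 1 - ‖b 0‖ ^ 2 := by
  set g : ℂ → ℂ := fun w => ∑' m, b m * w ^ m
  have hg : ∀ w : ℂ, ‖w‖ < 1 → HasSum (fun m => b m * w ^ m) (g w) := fun w hw =>
    (hb w hw).choose_spec.1.summable.hasSum
  have hB := hasFPowerSeriesOnBall_ofScalars_of_hasSum one_pos (by simpa using hg)
  have hP := hB.hasFPowerSeriesAt
  have hpick := norm_deriv_le_one_sub_sq_norm_of_mapsTo_ball (h := g) ?_ ?_
  · rw [hP.deriv, ← hP.coeff_zero (fun _ => 0), FormalMultilinearSeries.ofScalars_apply_eq,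
      FormalMultilinearSeries.ofScalars_apply_eq] at hpick
    simpa using hpick
  · simpa [← ENNReal.coe_one, eball_coe] using hB.differentiableOn
  · intro w hw
    obtain ⟨s, hs, hs1⟩ := hb w (mem_ball_zero_iff.mp hw)
    simpa [(hg w (mem_ball_zero_iff.mp hw)).unique hs] using hs1

theorem IsPrimitiveRoot.sum_pow_pow_eq_ite {R : Type*} [CommRing R] [IsDomain R] {ζ : R}
    {n : ℕ} (hζ : IsPrimitiveRoot ζ n) (k : ℕ) :
    ∑ j ∈ range n, (ζ ^ k) ^ j = if n ∣ k then (n : R) else 0 := by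
  split_ifs with hk
  · simp [(hζ.pow_eq_one_iff_dvd k).mpr hk]
  · have hne : ζ ^ k - 1 ≠ 0 := sub_ne_zero.mpr fun h => hk ((hζ.pow_eq_one_iff_dvd k).mp h)
    have hgeom := geom_sum_mul (ζ ^ k) n
    rw [pow_right_comm, hζ.pow_eq_one, one_pow, sub_self] at hgeom
    exact (mul_eq_zero.mp hgeom).resolve_right hne

theorem IsPrimitiveRoot.hasSum_multisection {K : Type*} [Field K] [CharZero K]
    [TopologicalSpace K] [IsTopologicalRing K] {n : ℕ} (hn : 0 < n) {ω : K}
    (hω : IsPrimitiveRoot ω n) {a : ℕ → K} {z : K} {F : ℕ → K}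
    (hF : ∀ j < n, HasSum (fun k => a k * (ω ^ j * z) ^ k) (F j)) :
    HasSum (fun m => a (n * m) * (z ^ n) ^ m) ((n : K)⁻¹ * ∑ j ∈ range n, F j) := by
  have hn' : (n : K) ≠ 0 := Nat.cast_ne_zero.mpr hn.ne'
  have hsum := (hasSum_sum fun j hj => hF j (mem_range.mp hj)).mul_left (n : K)⁻¹
  have hfilter : ∀ k, (n : K)⁻¹ * ∑ j ∈ range n, a k * (ω ^ j * z) ^ k =
      if n ∣ k then a k * z ^ k else 0 := fun k => by
    simp_rw [mul_pow, ← pow_mul, mul_comm _ k, pow_mul, ← mul_assoc, ← sum_mul, ← mul_sum,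
      hω.sum_pow_pow_eq_ite]
    split_ifs
    · field_simp
    · simp
  simp only [hfilter] at hsum
  have hinj : Function.Injective (n * ·) := fun _ _ h => Nat.eq_of_mul_eq_mul_left hn h
  rw [← hinj.hasSum_iff fun k hk => if_neg fun ⟨m, hm⟩ => hk ⟨m, hm.symm⟩] at hsum
  refine hsum.congr_fun fun m => ?_
  simp [pow_mul]

theorem norm_coeff_le_one_sub_sq_norm_coeff_zero {f : ℂ → ℂ} {a : ℕ → ℂ}
    (hf : ∀ z : ℂ, ‖z‖ < 1 → HasSum (fun k => a k * z ^ k) (f z))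
    (hb : ∀ z : ℂ, ‖z‖ < 1 → ‖f z‖ ≤ 1) {n : ℕ} (hn : 0 < n) :
    ‖a n‖ ≤ 1 - ‖a 0‖ ^ 2 := by
  suffices ∀ w : ℂ, ‖w‖ < 1 → ∃ s, HasSum (fun m => a (n * m) * w ^ m) s ∧ ‖s‖ ≤ 1 by
    simpa using norm_coeff_one_le_one_sub_sq_norm_coeff_zero this
  intro w hw
  obtain ⟨z, rfl⟩ := IsAlgClosed.exists_pow_nat_eq w hn
  have hz : ‖z‖ < 1 := by
    rwa [norm_pow, pow_lt_one_iff_of_nonneg (norm_nonneg z) hn.ne'] at hw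
  have hω := Complex.isPrimitiveRoot_exp n hn.ne'
  have hrot : ∀ j, ‖Complex.exp (2 * Real.pi * I / n) ^ j * z‖ < 1 := fun j => by
    rwa [norm_mul, norm_pow, hω.norm'_eq_one hn.ne', one_pow, one_mul]
  refine ⟨_, hω.hasSum_multisection hn fun j _ => hf _ (hrot j), ?_⟩
  rw [norm_mul, norm_inv, norm_natCast, inv_mul_le_one₀ (by positivity)]
  exact (norm_sum_le_of_le _ fun j _ => hb _ (hrot j)).trans_eq (by simp)

theorem tsum_mul_pow_le_one_of_le_one_sub_sq {c : ℕ → ℝ} (hc0 : ∀ k, 0 ≤ c k)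
    (hc : ∀ k, 0 < k → c k ≤ 1 - c 0 ^ 2) {r : ℝ} (hr0 : 0 ≤ r) (hr : r ≤ 1 / 3) :
    ∑' k, c k * r ^ k ≤ 1 := by
  set t := c 0
  have ht : 0 ≤ 1 - t ^ 2 := (hc0 1).trans (hc 1 one_pos)
  have hr1 : r < 1 := by linarith
  have hle : ∀ k, c k ≤ 1 := fun k => by
    rcases k.eq_zero_or_pos with rfl | hk
    · nlinarith [hc0 0]
    · nlinarith [hc k hk]
  have hsum : Summable fun k => c k * r ^ k :=
    (summable_geometric_of_lt_one hr0 hr1).of_nonneg_of_le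
      (fun k => mul_nonneg (hc0 k) (pow_nonneg hr0 k))
      (fun k => mul_le_of_le_one_left (pow_nonneg hr0 k) (hle k))
  have hgeom : HasSum (fun k => (1 - t ^ 2) * r ^ (k + 1)) ((1 - t ^ 2) * (r * (1 - r)⁻¹)) :=
    (((hasSum_geometric_of_lt_one hr0 hr1).mul_left r).mul_left _).congr_fun fun k => by ring
  have htail : ∑' k, c (k + 1) * r ^ (k + 1) ≤ (1 - t ^ 2) * (r * (1 - r)⁻¹) :=
    hasSum_le (fun k => mul_le_mul_of_nonneg_right (hc _ k.succ_pos) (pow_nonneg hr0 _))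
      ((summable_nat_add_iff 1).mpr hsum : Summable fun k => c (k + 1) * r ^ (k + 1)).hasSum hgeom
  have hhalf : r * (1 - r)⁻¹ ≤ 1 / 2 := by
    rw [mul_inv_le_iff₀ (by linarith)]
    linarith
  rw [hsum.tsum_eq_zero_add, pow_zero, mul_one]
  nlinarith [mul_le_mul_of_nonneg_left hhalf ht, sq_nonneg (1 - t)]

/-- Classical Bohr inequality: if `f = Σ aₙ zⁿ` is analytic on the unit disk with
`|f| ≤ 1`, then `Σ |aₙ| rⁿ ≤ 1` for `0 ≤ r ≤ 1/3`. -/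
theorem bohr_inequality (f : ℂ → ℂ) (a : ℕ → ℂ)
    (hf : ∀ z : ℂ, ‖z‖ < 1 → HasSum (fun n : ℕ => a n * z ^ n) (f z))
    (hb : ∀ z : ℂ, ‖z‖ < 1 → ‖f z‖ ≤ 1)
    (r : ℝ) (hr0 : 0 ≤ r) (hr : r ≤ 1 / 3) :
    ∑' n : ℕ, ‖a n‖ * r ^ n ≤ 1 :=
  tsum_mul_pow_le_one_of_le_one_sub_sq (fun n => norm_nonneg (a n))
    (fun _ hn => norm_coeff_le_one_sub_sq_norm_coeff_zero hf hb hn) hr0 hr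
end

section
/- Let f(z) = Σ_{n≥0} a_n z^n be analytic on the unit disk with |f(z)| ≤ 1. Then for every n ≥ 0, |a_{2n+1}| ≤ 1 - |a_0|² - |a_1|² - ⋯ - |a_n|². -/
/-!
Multiplication by a function bounded by `1` on the disk does not increase the `ℓ²` norm of the
Taylor coefficients of a polynomial: on a circle `|z| = r < 1` we have `|f P| ≤ |P|`, and Parseval
turns the circle averages of `|f P|²` and `|P|²` into coefficient sums. Parseval is only needed for
polynomials, since on such a circle the Taylor polynomials of `f` are bounded by `1` plus a
vanishing tail.

For `c ∈ ℂ` take `P = 1 + z ^ (n + 1) (c ā_n + c ā_{n-1} z + ⋯ + c ā_0 z ^ n)`. Then `f P` has the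
coefficients `a_0, …, a_n` in degrees `≤ n` and `a_{2n+1} + c S` in degree `2n+1`, where
`S = |a_0|² + ⋯ + |a_n|²`, while `‖P‖² = 1 + |c|² S`. With `c = t a_{2n+1}`, `t` real, this reads
`S + |a_{2n+1}|² (1 + t S)² ≤ 1 + t² |a_{2n+1}|² S`, and `t = 1 / (1 - S)` gives the claim.
-/

open Finset Polynomial Filter Topology ComplexConjugate
open scoped PowerSeries

namespace Polynomial

section NormedRing

variable {R : Type*} [NormedRing R]

theorem sum_sq_norm_coeff_eq_sum_range {P : R[X]} {N : ℕ} (h : P.natDegree < N) :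
    ∑ i ∈ P.support, ‖P.coeff i‖ ^ 2 = ∑ i ∈ range N, ‖P.coeff i‖ ^ 2 :=
  sum_subset (supp_subset_range h) fun i _ hi => by simp [notMem_support_iff.mp hi]

theorem sum_range_sq_norm_coeff_le (P : R[X]) (M : ℕ) :
    ∑ i ∈ range M, ‖P.coeff i‖ ^ 2 ≤ ∑ i ∈ P.support, ‖P.coeff i‖ ^ 2 := by
  rw [sum_sq_norm_coeff_eq_sum_range (N := max M (P.natDegree + 1)) (by omega)]
  exact sum_le_sum_of_subset_of_nonneg (range_subset_range.2 (le_max_left _ _))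
    fun _ _ _ => by positivity

theorem sum_sq_norm_coeff_add_X_pow_mul {A : R[X]} {k : ℕ} (hA : A.natDegree < k) (B : R[X]) :
    ∑ i ∈ (A + X ^ k * B).support, ‖(A + X ^ k * B).coeff i‖ ^ 2 =
      ∑ i ∈ A.support, ‖A.coeff i‖ ^ 2 + ∑ i ∈ B.support, ‖B.coeff i‖ ^ 2 := by
  have hdeg : (A + X ^ k * B).natDegree < k + (B.natDegree + 1) := by
    refine (natDegree_add_le _ _).trans_lt (max_lt (by omega) ?_)
    have hX : (X ^ k : R[X]).natDegree ≤ k := natDegree_X_pow_le k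
    exact natDegree_mul_le.trans_lt (by omega)
  rw [sum_sq_norm_coeff_eq_sum_range hdeg, sum_sq_norm_coeff_eq_sum_range hA,
    sum_sq_norm_coeff_eq_sum_range (lt_add_one B.natDegree), sum_range_add]
  congr 1 <;> refine sum_congr rfl fun i hi => ?_
  · simp [coeff_X_pow_mul', (mem_range.1 hi).not_ge]
  · rw [coeff_add, coeff_eq_zero_of_natDegree_lt (by omega), coeff_X_pow_mul']
    simp

theorem sum_sq_norm_coeff_trunc_mk (g : ℕ → R) (n : ℕ) :
    ∑ i ∈ (PowerSeries.trunc (n + 1) (PowerSeries.mk g)).support,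
        ‖(PowerSeries.trunc (n + 1) (PowerSeries.mk g)).coeff i‖ ^ 2 =
      ∑ i ∈ range (n + 1), ‖g i‖ ^ 2 := by
  rw [sum_sq_norm_coeff_eq_sum_range (PowerSeries.natDegree_trunc_lt _ n)]
  exact sum_congr rfl fun i hi => by simp [PowerSeries.coeff_trunc, mem_range.1 hi]

end NormedRing

theorem sum_sq_norm_coeff_mul_le {A : ℂ[X]} {c : ℝ} (hA : ∀ z : ℂ, ‖z‖ = 1 → ‖A.eval z‖ ≤ c)
    (B : ℂ[X]) :
    ∑ i ∈ (A * B).support, ‖(A * B).coeff i‖ ^ 2 ≤ c ^ 2 * ∑ i ∈ B.support, ‖B.coeff i‖ ^ 2 := by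
  rw [sum_sq_norm_coeff_eq_circleAverage, sum_sq_norm_coeff_eq_circleAverage,
    ← smul_eq_mul (c ^ 2), ← Real.circleAverage_fun_smul]
  refine Real.circleAverage_mono ?_ ?_ fun z hz => ?_
  · exact (by fun_prop : Continuous _).continuousOn.circleIntegrable zero_le_one
  · exact (by fun_prop : Continuous _).continuousOn.circleIntegrable zero_le_one
  · rw [mem_sphere_zero_iff_norm, abs_one] at hz
    rw [eval_mul, norm_mul, mul_pow, smul_eq_mul]
    gcongr
    exact hA z hz

end Polynomial

namespace PowerSeries

theorem coeff_mul_eq_coeff_trunc_mul {R : Type*} [CommSemiring R] {m K : ℕ} (h : m < K)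
    (φ ψ : R⟦X⟧) : coeff m (φ * ψ) = coeff m ((trunc K φ : R⟦X⟧) * ψ) := by
  rw [← coeff_coe_trunc_of_lt h, ← trunc_trunc_mul, coeff_coe_trunc_of_lt h]

theorem norm_eval_trunc_mk_sub_tsum_le {b : ℕ → ℂ} (hb : Summable (‖b ·‖)) {z : ℂ}
    (hz : ‖z‖ ≤ 1) (K : ℕ) :
    ‖(trunc K (mk b)).eval z - ∑' k, b k * z ^ k‖ ≤ ∑' k, ‖b (k + K)‖ := by
  have hle : ∀ k, ‖b k * z ^ k‖ ≤ ‖b k‖ := fun k => by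
    rw [norm_mul, norm_pow]
    exact mul_le_of_le_one_right (norm_nonneg _) (pow_le_one₀ (norm_nonneg _) hz)
  have hbz : Summable fun k => ‖b k * z ^ k‖ := hb.of_nonneg_of_le (fun _ => norm_nonneg _) hle
  have htail : Summable fun k => ‖b (k + K) * z ^ (k + K)‖ := (summable_nat_add_iff K).2 hbz
  rw [trunc_apply, eval_finsetSum, ← range_eq_Ico, ← hbz.of_norm.sum_add_tsum_nat_add K]
  simp only [eval_monomial, coeff_mk, sub_add_cancel_left, norm_neg]
  exact (norm_tsum_le_tsum_norm htail).trans
    (htail.tsum_le_tsum (fun k => hle _) ((summable_nat_add_iff K).2 hb))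

theorem sum_range_sq_norm_coeff_mk_mul_le {b : ℕ → ℂ} (hb : Summable (‖b ·‖))
    (hbound : ∀ z : ℂ, ‖z‖ = 1 → ‖∑' k, b k * z ^ k‖ ≤ 1) (P : ℂ[X]) (M : ℕ) :
    ∑ m ∈ range M, ‖coeff m (mk b * (P : ℂ⟦X⟧))‖ ^ 2 ≤ ∑ i ∈ P.support, ‖P.coeff i‖ ^ 2 := by
  have hK : ∀ K, M ≤ K → ∑ m ∈ range M, ‖coeff m (mk b * (P : ℂ⟦X⟧))‖ ^ 2 ≤
      (1 + ∑' k, ‖b (k + K)‖) ^ 2 * ∑ i ∈ P.support, ‖P.coeff i‖ ^ 2 := by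
    intro K hMK
    have hA : ∀ z : ℂ, ‖z‖ = 1 → ‖(trunc K (mk b)).eval z‖ ≤ 1 + ∑' k, ‖b (k + K)‖ :=
      fun z hz => (norm_le_norm_add_norm_sub' _ (∑' k, b k * z ^ k)).trans
        (add_le_add (hbound z hz) (norm_eval_trunc_mk_sub_tsum_le hb hz.le K))
    calc ∑ m ∈ range M, ‖coeff m (mk b * (P : ℂ⟦X⟧))‖ ^ 2
        = ∑ m ∈ range M, ‖(trunc K (mk b) * P).coeff m‖ ^ 2 :=
          sum_congr rfl fun m hm => by
            rw [coeff_mul_eq_coeff_trunc_mul ((mem_range.1 hm).trans_le hMK),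
              ← Polynomial.coe_mul, Polynomial.coeff_coe]
      _ ≤ ∑ i ∈ (trunc K (mk b) * P).support, ‖(trunc K (mk b) * P).coeff i‖ ^ 2 :=
          sum_range_sq_norm_coeff_le _ M
      _ ≤ _ := sum_sq_norm_coeff_mul_le hA P
  have hlim : Tendsto (fun K => (1 + ∑' k, ‖b (k + K)‖) ^ 2 * ∑ i ∈ P.support, ‖P.coeff i‖ ^ 2)
      atTop (𝓝 ((1 + 0) ^ 2 * ∑ i ∈ P.support, ‖P.coeff i‖ ^ 2)) :=
    (((tendsto_sum_nat_add fun k => ‖b k‖).const_add 1).pow 2).mul_const _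
  simpa using ge_of_tendsto hlim (eventually_atTop.2 ⟨M, hK⟩)

end PowerSeries

theorem sum_range_sq_norm_coeff_mk_mul_le_of_norm_le_one {f : ℂ → ℂ} {a : ℕ → ℂ}
    (hf : ∀ z : ℂ, ‖z‖ < 1 → HasSum (fun n => a n * z ^ n) (f z))
    (hb : ∀ z : ℂ, ‖z‖ < 1 → ‖f z‖ ≤ 1) (P : ℂ[X]) (M : ℕ) :
    ∑ m ∈ range M, ‖PowerSeries.coeff m (PowerSeries.mk a * (P : ℂ⟦X⟧))‖ ^ 2 ≤
      ∑ i ∈ P.support, ‖P.coeff i‖ ^ 2 := by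
  set F : ℝ → ℝ := fun r => ∑ m ∈ range M,
    ‖PowerSeries.coeff m (PowerSeries.mk (fun k => a k * (r : ℂ) ^ k) * (P : ℂ⟦X⟧))‖ ^ 2
  have hF : Continuous F := by
    simp only [F, PowerSeries.coeff_mul, PowerSeries.coeff_mk, coeff_coe]
    fun_prop
  have hFr : ∀ r ∈ Set.Ico (0 : ℝ) 1, F r ≤ ∑ i ∈ P.support, ‖P.coeff i‖ ^ 2 := by
    rintro r ⟨hr0, hr1⟩
    have hr : ‖(r : ℂ)‖ < 1 := by rwa [Complex.norm_real, Real.norm_of_nonneg hr0]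
    refine PowerSeries.sum_range_sq_norm_coeff_mk_mul_le (summable_norm_iff.2 (hf _ hr).summable)
      (fun z hz => ?_) P M
    have hrz : ‖(r : ℂ) * z‖ < 1 := by rwa [norm_mul, hz, mul_one]
    simp_rw [mul_assoc, ← mul_pow]
    rw [(hf _ hrz).tsum_eq]
    exact hb _ hrz
  have hF1 : F 1 = ∑ m ∈ range M, ‖PowerSeries.coeff m (PowerSeries.mk a * (P : ℂ⟦X⟧))‖ ^ 2 := by
    simp [F]
  rw [← hF1]
  exact le_of_tendsto ((hF.tendsto 1).mono_left nhdsWithin_le_nhds)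
    (eventually_of_mem (Ico_mem_nhdsLT zero_lt_one) hFr)

noncomputable def carlsonTestPoly (a : ℕ → ℂ) (n : ℕ) (c : ℂ) : ℂ[X] :=
  1 + X ^ (n + 1) * PowerSeries.trunc (n + 1) (PowerSeries.mk fun k => c * conj (a (n - k)))

theorem mk_mul_carlsonTestPoly (a : ℕ → ℂ) (n : ℕ) (c : ℂ) :
    PowerSeries.mk a * (carlsonTestPoly a n c : ℂ⟦X⟧) = PowerSeries.mk a + PowerSeries.X ^ (n + 1) *
      (PowerSeries.mk a *
        (PowerSeries.trunc (n + 1) (PowerSeries.mk fun k => c * conj (a (n - k))) : ℂ⟦X⟧)) := by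
  simp only [carlsonTestPoly, Polynomial.coe_add, Polynomial.coe_one, Polynomial.coe_mul,
    Polynomial.coe_pow, Polynomial.coe_X]
  ring

theorem coeff_mk_mul_carlsonTestPoly_of_le (a : ℕ → ℂ) {n m : ℕ} (hm : m ≤ n) (c : ℂ) :
    PowerSeries.coeff m (PowerSeries.mk a * (carlsonTestPoly a n c : ℂ⟦X⟧)) = a m := by
  rw [mk_mul_carlsonTestPoly, map_add, PowerSeries.coeff_X_pow_mul', if_neg (by omega),
    PowerSeries.coeff_mk, add_zero]

theorem coeff_mk_mul_carlsonTestPoly_two_mul_add_one (a : ℕ → ℂ) (n : ℕ) (c : ℂ) :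
    PowerSeries.coeff (2 * n + 1) (PowerSeries.mk a * (carlsonTestPoly a n c : ℂ⟦X⟧)) =
      a (2 * n + 1) + c * ((∑ k ∈ range (n + 1), ‖a k‖ ^ 2 : ℝ) : ℂ) := by
  rw [mk_mul_carlsonTestPoly, map_add, PowerSeries.coeff_X_pow_mul', if_pos (by omega),
    show 2 * n + 1 - (n + 1) = n by omega, PowerSeries.coeff_mk, PowerSeries.coeff_mul,
    Finset.Nat.sum_antidiagonal_eq_sum_range_succ_mk, Complex.ofReal_sum, mul_sum]
  congr 1
  refine sum_congr rfl fun k hk => ?_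
  have hk : k ≤ n := Nat.lt_succ_iff.1 (mem_range.1 hk)
  rw [PowerSeries.coeff_mk, coeff_coe, PowerSeries.coeff_trunc, if_pos (by omega),
    PowerSeries.coeff_mk, Nat.sub_sub_self hk, Complex.ofReal_pow, ← Complex.mul_conj']
  ring

theorem sum_sq_norm_coeff_carlsonTestPoly (a : ℕ → ℂ) (n : ℕ) (c : ℂ) :
    ∑ i ∈ (carlsonTestPoly a n c).support, ‖(carlsonTestPoly a n c).coeff i‖ ^ 2 =
      1 + ‖c‖ ^ 2 * ∑ k ∈ range (n + 1), ‖a k‖ ^ 2 := by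
  rw [carlsonTestPoly, sum_sq_norm_coeff_add_X_pow_mul (by simp), sum_sq_norm_coeff_trunc_mk,
    mul_sum, ← sum_range_reflect (fun k => ‖c‖ ^ 2 * ‖a k‖ ^ 2), ← C_1, support_C one_ne_zero]
  simp [mul_pow]

theorem le_one_sub_of_forall_add_sq_le {S u : ℝ} (hu : 0 ≤ u)
    (h : ∀ t : ℝ, S + u ^ 2 * (1 + t * S) ^ 2 ≤ 1 + t ^ 2 * u ^ 2 * S) : u ≤ 1 - S := by
  rcases lt_or_ge S 1 with hS | hS
  · have hS' : 0 < 1 - S := sub_pos.2 hS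
    have h1 := h (1 - S)⁻¹
    rw [show 1 + (1 - S)⁻¹ * S = (1 - S)⁻¹ by field_simp; ring] at h1
    have hsq : (u * (1 - S)⁻¹) ^ 2 ≤ 1 := by nlinarith
    have hle := (pow_le_one_iff_of_nonneg (by positivity) two_ne_zero).1 hsq
    rwa [mul_inv_le_iff₀ hS', one_mul] at hle
  · nlinarith [h 0]

/-- Carlson's lemma, part (a): if `f = Σ aₙ zⁿ` is analytic on the unit disk with
`|f| ≤ 1`, then `|a_{2n+1}| ≤ 1 - |a₀|² - ⋯ - |aₙ|²`. -/
theorem carlson_odd (f : ℂ → ℂ) (a : ℕ → ℂ)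
    (hf : ∀ z : ℂ, ‖z‖ < 1 → HasSum (fun n : ℕ => a n * z ^ n) (f z))
    (hb : ∀ z : ℂ, ‖z‖ < 1 → ‖f z‖ ≤ 1) (n : ℕ) :
    ‖a (2 * n + 1)‖ ≤ 1 - ∑ k ∈ Finset.range (n + 1), ‖a k‖ ^ 2 := by
  set S := ∑ k ∈ range (n + 1), ‖a k‖ ^ 2
  refine le_one_sub_of_forall_add_sq_le (norm_nonneg _) fun t => ?_
  set P := carlsonTestPoly a n (t * a (2 * n + 1))
  set g := PowerSeries.mk a * (P : ℂ⟦X⟧)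
  have hcoeff : PowerSeries.coeff (2 * n + 1) g = a (2 * n + 1) * ((1 + t * S : ℝ) : ℂ) := by
    rw [coeff_mk_mul_carlsonTestPoly_two_mul_add_one, Complex.ofReal_add, Complex.ofReal_one,
      Complex.ofReal_mul]
    ring
  have hsub : range (n + 1) ⊆ range (2 * n + 1) := range_subset_range.2 (by omega)
  calc S + ‖a (2 * n + 1)‖ ^ 2 * (1 + t * S) ^ 2
      = ∑ m ∈ range (n + 1), ‖PowerSeries.coeff m g‖ ^ 2 +
          ‖PowerSeries.coeff (2 * n + 1) g‖ ^ 2 := by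
        rw [hcoeff, norm_mul, Complex.norm_real, Real.norm_eq_abs, mul_pow, sq_abs]
        congr 1
        exact sum_congr rfl fun m hm => by
          rw [coeff_mk_mul_carlsonTestPoly_of_le a (Nat.lt_succ_iff.1 (mem_range.1 hm))]
    _ ≤ ∑ m ∈ range (2 * n + 2), ‖PowerSeries.coeff m g‖ ^ 2 := by
        rw [sum_range_succ _ (2 * n + 1)]
        exact add_le_add_left (sum_le_sum_of_subset_of_nonneg hsub fun _ _ _ => by positivity) _
    _ ≤ ∑ i ∈ P.support, ‖P.coeff i‖ ^ 2 :=
        sum_range_sq_norm_coeff_mk_mul_le_of_norm_le_one hf hb P _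
    _ = 1 + t ^ 2 * ‖a (2 * n + 1)‖ ^ 2 * S := by
        rw [sum_sq_norm_coeff_carlsonTestPoly, norm_mul, Complex.norm_real, Real.norm_eq_abs,
          mul_pow, sq_abs]
end

section
/- Let f(z) = Σ_{k≥0} a_k z^k be analytic on the unit disk with |f(z)| ≤ 1, and let p ∈ (0,2]. Then |a_0|^p + |a_1| r ≤ 1 for all r with 0 ≤ r ≤ p/2. -/
/-! Schwarz–Pick at the origin gives `|a₁| ≤ 1 - |a₀|²`: compose `f` with the disk
automorphism `w ↦ (w - a₀) / (1 - conj a₀ w)` and apply the Schwarz lemma (if `|f|` reaches `1`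
inside the disk, `f` is constant by the maximum modulus principle and `a₁ = 0`). Bernoulli's
inequality with exponent `p / 2 ≤ 1` gives `|a₀|^p ≤ 1 - (p/2)(1 - |a₀|²)`, and `r ≤ p / 2`
finishes. -/

open Metric Set Complex FormalMultilinearSeries
open scoped ENNReal ComplexConjugate

theorem hasFPowerSeriesOnBall_ofScalars_of_hasSum_s8 {𝕜 : Type*} [RCLike 𝕜] {f : 𝕜 → 𝕜}
    {a : ℕ → 𝕜} {R : ℝ≥0∞} (hR : 0 < R)
    (hf : ∀ z ∈ eball (0 : 𝕜) R, HasSum (fun k => a k * z ^ k) (f z)) :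
    HasFPowerSeriesOnBall f (ofScalars 𝕜 a) 0 R where
  r_le := ENNReal.le_of_forall_nnreal_lt fun q hq => by
    have hsum := hf ((q : ℝ) : 𝕜) (by simpa [edist_zero_right, enorm_eq_nnnorm] using hq)
    refine (ofScalars 𝕜 a).le_radius_of_tendsto (l := 0) ?_
    simpa [ofScalars_norm] using hsum.summable.tendsto_atTop_zero.norm
  r_pos := hR
  hasSum hy := by simpa [ofScalars_apply_eq, mul_comm] using hf _ hy

namespace Complex

theorem norm_sub_lt_norm_one_sub_conj_mul {c w : ℂ} (hc : ‖c‖ < 1) (hw : ‖w‖ < 1) :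
    ‖w - c‖ < ‖1 - conj c * w‖ := by
  have hnormSq :
      normSq (1 - conj c * w) - normSq (w - c) = (1 - normSq c) * (1 - normSq w) := by
    simp only [normSq_apply, sub_re, sub_im, mul_re, mul_im, one_re, one_im, conj_re, conj_im]
    ring
  rw [← sq_lt_sq₀ (norm_nonneg _) (norm_nonneg _), ← normSq_eq_norm_sq, ← normSq_eq_norm_sq]
  rw [← sq_lt_one_iff₀ (norm_nonneg _), ← normSq_eq_norm_sq] at hc hw
  nlinarith

variable {f : ℂ → ℂ}

theorem hasDerivAt_mobius_comp {f' x : ℂ} (hf : HasDerivAt f f' x) (hx : ‖f x‖ < 1) :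
    HasDerivAt (fun z => (f z - f x) / (1 - conj (f x) * f z))
      (f' / (1 - ‖f x‖ ^ 2 : ℝ)) x := by
  have hden : (1 - conj (f x) * f x) = ((1 - ‖f x‖ ^ 2 : ℝ) : ℂ) := by
    push_cast; rw [conj_mul']
  have hne : 1 - conj (f x) * f x ≠ 0 := by
    rw [hden, ofReal_ne_zero, sub_ne_zero]
    exact (pow_lt_one₀ (norm_nonneg _) hx two_ne_zero).ne'
  refine ((hf.sub_const (f x)).div ((hf.const_mul (conj (f x))).const_sub 1) hne).congr_deriv ?_
  rw [← hden]
  field_simp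
  ring

theorem norm_deriv_le_one_sub_sq_of_mapsTo_ball (hd : DifferentiableOn ℂ f (ball 0 1))
    (hmaps : MapsTo f (ball 0 1) (ball 0 1)) : ‖deriv f 0‖ ≤ 1 - ‖f 0‖ ^ 2 := by
  have hc : ‖f 0‖ < 1 := mem_ball_zero_iff.mp (hmaps (mem_ball_self one_pos))
  have hpos : 0 < 1 - ‖f 0‖ ^ 2 := sub_pos.mpr (pow_lt_one₀ (norm_nonneg _) hc two_ne_zero)
  have hmob : ∀ z ∈ ball (0 : ℂ) 1, ‖f z - f 0‖ < ‖1 - conj (f 0) * f z‖ := fun z hz =>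
    norm_sub_lt_norm_one_sub_conj_mul hc (mem_ball_zero_iff.mp (hmaps hz))
  set g := fun z => (f z - f 0) / (1 - conj (f 0) * f z)
  have hgd : DifferentiableOn ℂ g (ball 0 1) :=
    (hd.sub_const _).div ((differentiableOn_const _).sub ((differentiableOn_const _).mul hd))
      fun z hz => norm_pos_iff.mp ((norm_nonneg _).trans_lt (hmob z hz))
  have hgmaps : MapsTo g (ball 0 1) (closedBall (g 0) 1) := fun z hz => by
    have := hmob z hz
    simp only [g, sub_self, zero_div, mem_closedBall_zero_iff, norm_div]
    exact div_le_one_of_le₀ this.le (norm_nonneg _)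
  have hfd : HasDerivAt f (deriv f 0) 0 :=
    (hd.differentiableAt (ball_mem_nhds 0 one_pos)).hasDerivAt
  have hschwarz := norm_deriv_le_one_of_mapsTo_ball hgd hgmaps one_pos
  rwa [(hasDerivAt_mobius_comp hfd hc).deriv, norm_div, norm_real, Real.norm_of_nonneg hpos.le,
    div_le_one hpos] at hschwarz

theorem norm_deriv_le_one_sub_sq_of_mapsTo_closedBall (hd : DifferentiableOn ℂ f (ball 0 1))
    (hmaps : MapsTo f (ball 0 1) (closedBall 0 1)) : ‖deriv f 0‖ ≤ 1 - ‖f 0‖ ^ 2 := by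
  by_cases hlt : MapsTo f (ball 0 1) (ball 0 1)
  · exact norm_deriv_le_one_sub_sq_of_mapsTo_ball hd hlt
  obtain ⟨z₀, hz₀, hz₀_norm⟩ : ∃ z₀ ∈ ball (0 : ℂ) 1, ‖f z₀‖ = 1 := by
    simp only [MapsTo, not_forall, mem_ball_zero_iff, not_lt] at hlt
    obtain ⟨z₀, hz₀, hle⟩ := hlt
    have hz₀' : z₀ ∈ ball (0 : ℂ) 1 := mem_ball_zero_iff.mpr hz₀
    exact ⟨z₀, hz₀', le_antisymm (mem_closedBall_zero_iff.mp (hmaps hz₀')) hle⟩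
  have hmax : IsMaxOn (norm ∘ f) (ball 0 1) z₀ := fun z hz => by
    simpa [hz₀_norm] using hmaps hz
  have hconst := eqOn_of_isPreconnected_of_isMaxOn_norm (convex_ball (0 : ℂ) 1).isPreconnected
    isOpen_ball hd hz₀ hmax
  have hderiv : deriv f 0 = 0 := by
    rw [(Filter.eventuallyEq_of_mem (ball_mem_nhds 0 one_pos) hconst).deriv_eq]
    exact deriv_const _ _
  rw [hderiv, norm_zero, sub_nonneg]
  exact pow_le_one₀ (norm_nonneg _) (mem_closedBall_zero_iff.mp (hmaps (mem_ball_self one_pos)))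

end Complex

theorem Real.rpow_le_one_sub_mul_one_sub_sq {x p : ℝ} (hx : 0 ≤ x) (hp0 : 0 ≤ p) (hp2 : p ≤ 2) :
    x ^ p ≤ 1 - p / 2 * (1 - x ^ 2) := by
  have hsq : x ^ p = (1 + (x ^ 2 - 1)) ^ (p / 2) := by
    rw [add_sub_cancel, ← Real.rpow_natCast, ← Real.rpow_mul hx, Nat.cast_ofNat,
      mul_div_cancel₀ _ two_ne_zero]
  have hbern := rpow_one_add_le_one_add_mul_self (s := x ^ 2 - 1) (p := p / 2)
    (by nlinarith [sq_nonneg x]) (by linarith) (by linarith)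
  linarith

theorem truncated_bohr_one_general (f : ℂ → ℂ) (a : ℕ → ℂ) (p : ℝ)
    (hf : ∀ z : ℂ, ‖z‖ < 1 → HasSum (fun k : ℕ => a k * z ^ k) (f z))
    (hb : ∀ z : ℂ, ‖z‖ < 1 → ‖f z‖ ≤ 1)
    (hp0 : 0 < p) (hp2 : p ≤ 2)
    (r : ℝ) (hr : r ≤ p / 2) :
    ‖a 0‖ ^ p + ‖a 1‖ * r ≤ 1 := by
  have hball : eball (0 : ℂ) 1 = ball 0 1 := by simpa using eball_coe (x := (0 : ℂ)) (ε := 1)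
  have hP : HasFPowerSeriesOnBall f (ofScalars ℂ a) 0 1 :=
    hasFPowerSeriesOnBall_ofScalars_of_hasSum_s8 one_pos fun z hz =>
      hf z (mem_ball_zero_iff.mp (hball ▸ hz))
  have hf0 : f 0 = a 0 := by simpa using (hP.coeff_zero (fun _ => 0)).symm
  have hf'0 : deriv f 0 = a 1 := by simpa using hP.hasFPowerSeriesAt.deriv
  have hd : DifferentiableOn ℂ f (ball 0 1) := hball ▸ hP.differentiableOn
  have hcoeff : ‖a 1‖ ≤ 1 - ‖a 0‖ ^ 2 := by
    rw [← hf0, ← hf'0]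
    exact norm_deriv_le_one_sub_sq_of_mapsTo_closedBall hd fun z hz => by
      simpa using hb z (mem_ball_zero_iff.mp hz)
  calc ‖a 0‖ ^ p + ‖a 1‖ * r
      ≤ (1 - p / 2 * (1 - ‖a 0‖ ^ 2)) + (1 - ‖a 0‖ ^ 2) * (p / 2) :=
        add_le_add (Real.rpow_le_one_sub_mul_one_sub_sq (norm_nonneg _) hp0.le hp2)
          ((mul_le_mul_of_nonneg_left hr (norm_nonneg _)).trans
            (mul_le_mul_of_nonneg_right hcoeff (by positivity)))
    _ = 1 := by ring

/-- The `n = 1` case of the truncated refined Bohr inequality: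
`|a₀|^p + |a₁| r ≤ 1` for `0 ≤ r ≤ p/2`. -/
theorem truncated_bohr_one (f : ℂ → ℂ) (a : ℕ → ℂ) (p : ℝ)
    (hf : ∀ z : ℂ, ‖z‖ < 1 → HasSum (fun k : ℕ => a k * z ^ k) (f z))
    (hb : ∀ z : ℂ, ‖z‖ < 1 → ‖f z‖ ≤ 1)
    (hp0 : 0 < p) (hp2 : p ≤ 2)
    (r : ℝ) (hr0 : 0 ≤ r) (hr : r ≤ p / 2) :
    ‖a 0‖ ^ p + ‖a 1‖ * r ≤ 1 :=
  truncated_bohr_one_general f a p hf hb hp0 hp2 r hr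
end

section
/- Let f(z) = Σ a_k z^k and g(z) = Σ b_k z^k be analytic on the unit disk with f quasi-subordinate to g (i.e., f(z) = W(z) g(ω(z)) with W, ω analytic self-maps of D bounded by 1 and ω(0) = 0). Let {φ_n(r)} be nonnegative continuous functions on [0,1) with φ_0 ≡ 1, Σ φ_n locally uniformly convergent, and φ_{m+n}(r) ≤ φ_m(r) φ_n(r) for all m, n ≥ 0. If r ∈ [0,1) satisfies 1 ≥ 2 Σ_{n≥1} φ_n(r), then Σ_{k≥0} |a_k| φ_k(r) ≤ Σ_{k≥0} |b_k| φ_k(r). -/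
open Filter


open Filter Metric Set

namespace BohrQS

/-- Coefficient representation of `F` on the ball of radius `R`. -/
def CoeffsOn (R : ℝ) (F : ℂ → ℂ) (d : ℕ → ℂ) : Prop :=
  ∀ z : ℂ, ‖z‖ < R → HasSum (fun k : ℕ => d k * z ^ k) (F z)

theorem CoeffsOn.mono {R R' : ℝ} {F : ℂ → ℂ} {d : ℕ → ℂ} (h : CoeffsOn R F d) (hle : R' ≤ R) :
    CoeffsOn R' F d := fun z hz => h z (lt_of_lt_of_le hz hle)

theorem CoeffsOn.congr {R : ℝ} {F G : ℂ → ℂ} {d : ℕ → ℂ} (h : CoeffsOn R F d)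
    (hFG : ∀ z : ℂ, ‖z‖ < R → F z = G z) : CoeffsOn R G d :=
  fun z hz => (hFG z hz) ▸ h z hz

theorem CoeffsOn.hasFPowerSeriesOnBall {R : ℝ} {F : ℂ → ℂ} {d : ℕ → ℂ}
    (h : CoeffsOn R F d) (hR : 0 < R) :
    HasFPowerSeriesOnBall F (FormalMultilinearSeries.ofScalars ℂ d) 0 (ENNReal.ofReal R) := by
  constructor
  · apply ENNReal.le_of_forall_nnreal_lt
    intro ρ hρ
    apply FormalMultilinearSeries.le_radius_of_summable
    have hρR : (ρ : ℝ) < R := by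
      rw [← ENNReal.ofReal_coe_nnreal] at hρ
      exact (ENNReal.ofReal_lt_ofReal_iff hR).mp hρ
    have hz : ‖((ρ : ℝ) : ℂ)‖ < R := by
      simpa [Complex.norm_real, abs_of_nonneg ρ.coe_nonneg] using hρR
    have hs : Summable fun k : ℕ => d k * ((ρ : ℝ) : ℂ) ^ k := (h _ hz).summable
    have hs' : Summable fun k : ℕ => ‖d k * ((ρ : ℝ) : ℂ) ^ k‖ := summable_norm_iff.mpr hs
    apply hs'.congr
    intro n
    rw [norm_mul, norm_pow, Complex.norm_real, Real.norm_eq_abs, abs_of_nonneg ρ.coe_nonneg,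
      FormalMultilinearSeries.ofScalars_norm]
  · simpa using ENNReal.ofReal_pos.mpr hR
  · intro y hy
    rw [Metric.emetric_ball, mem_ball_zero_iff] at hy
    have := h y hy
    simp only [FormalMultilinearSeries.ofScalars_apply_eq, smul_eq_mul, zero_add]
    exact this

theorem CoeffsOn.hasFPowerSeriesAt {R : ℝ} {F : ℂ → ℂ} {d : ℕ → ℂ}
    (h : CoeffsOn R F d) (hR : 0 < R) :
    HasFPowerSeriesAt F (FormalMultilinearSeries.ofScalars ℂ d) 0 :=
  ⟨_, h.hasFPowerSeriesOnBall hR⟩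

/-- Uniqueness of power series coefficients. -/
theorem CoeffsOn.unique {R R' : ℝ} {F : ℂ → ℂ} {d e : ℕ → ℂ}
    (hd : CoeffsOn R F d) (he : CoeffsOn R' F e) (hR : 0 < R) (hR' : 0 < R') : d = e := by
  have := (hd.hasFPowerSeriesAt hR).eq_formalMultilinearSeries (he.hasFPowerSeriesAt hR')
  exact (FormalMultilinearSeries.ofScalars_series_eq_iff ℂ d e).mp this

theorem CoeffsOn.differentiableOn {R : ℝ} {F : ℂ → ℂ} {d : ℕ → ℂ}
    (h : CoeffsOn R F d) (hR : 0 < R) : DifferentiableOn ℂ F (ball 0 R) := by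
  have := (h.hasFPowerSeriesOnBall hR).differentiableOn
  rwa [Metric.emetric_ball] at this

theorem CoeffsOn.deriv_zero {R : ℝ} {F : ℂ → ℂ} {d : ℕ → ℂ}
    (h : CoeffsOn R F d) (hR : 0 < R) : HasDerivAt F (d 1) 0 := by
  have := (h.hasFPowerSeriesAt hR).hasDerivAt
  have hc := FormalMultilinearSeries.ofScalars_apply_eq (E := ℂ) d (1 : ℂ) 1
  simp only [smul_eq_mul, one_pow, mul_one] at hc
  rwa [hc] at this

theorem CoeffsOn.apply_zero {R : ℝ} {F : ℂ → ℂ} {d : ℕ → ℂ}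
    (h : CoeffsOn R F d) (hR : 0 < R) : F 0 = d 0 := by
  have h0 := h 0 (by simpa using hR)
  have : HasSum (fun k : ℕ => d k * (0 : ℂ) ^ k) (d 0) := by
    have := hasSum_single (f := fun k : ℕ => d k * (0 : ℂ) ^ k) 0
      (by intro b hb; simp [zero_pow hb])
    simpa using this
  exact h0.unique this

/-- Constant functions have the obvious coefficients. -/
theorem coeffsOn_const {R : ℝ} (c : ℂ) :
    CoeffsOn R (fun _ => c) (fun k => if k = 0 then c else 0) := by
  intro z hz
  have := hasSum_single (f := fun k : ℕ => (if k = 0 then c else 0) * z ^ k) 0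
    (by intro b hb; simp [hb])
  simpa using this

end BohrQS
namespace BohrQS

/-- Either `F` is strictly bounded by 1 on the unit ball, or constant. -/
theorem dichotomy {F : ℂ → ℂ} (hd : DifferentiableOn ℂ F (ball 0 1))
    (hb : ∀ z : ℂ, ‖z‖ < 1 → ‖F z‖ ≤ 1) :
    (∀ z : ℂ, ‖z‖ < 1 → ‖F z‖ < 1) ∨ (∀ z : ℂ, ‖z‖ < 1 → F z = F 0) := by
  by_cases h : ∃ z0 : ℂ, ‖z0‖ < 1 ∧ 1 ≤ ‖F z0‖
  · right
    obtain ⟨z0, hz0, hz1⟩ := h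
    have hmax : IsMaxOn (norm ∘ F) (ball 0 1) z0 := by
      intro z hz
      rw [mem_ball_zero_iff] at hz
      exact le_trans (hb z hz) hz1
    have heq := Complex.eqOn_of_isPreconnected_of_isMaxOn_norm
      (convex_ball (0:ℂ) 1).isPreconnected isOpen_ball hd (mem_ball_zero_iff.mpr hz0) hmax
    intro z hz
    have h1 := heq (mem_ball_zero_iff.mpr hz)
    have h2 := heq (mem_ball_zero_iff.mpr (by norm_num : ‖(0:ℂ)‖ < (1:ℝ)))
    simp only [Function.const_apply] at h1 h2
    rw [h1, h2]
  · left
    push_neg at h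
    intro z hz
    exact h z hz

/-- The Möbius map sends the unit disk into itself. -/
theorem moebius_lt_one {c w : ℂ} (hc : ‖c‖ < 1) (hw : ‖w‖ < 1) :
    ‖(w - c) / (1 - (starRingEnd ℂ) c * w)‖ < 1 := by
  have hcabs : Complex.normSq c < 1 := by
    rw [Complex.normSq_eq_norm_sq]
    nlinarith [norm_nonneg c]
  have hwabs : Complex.normSq w < 1 := by
    rw [Complex.normSq_eq_norm_sq]
    nlinarith [norm_nonneg w]
  rw [Complex.normSq_apply] at hcabs hwabs
  have hkey : Complex.normSq (w - c) < Complex.normSq (1 - (starRingEnd ℂ) c * w) := by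
    simp only [Complex.normSq_apply, Complex.sub_re, Complex.sub_im, Complex.one_re,
      Complex.one_im, Complex.mul_re, Complex.mul_im, Complex.conj_re, Complex.conj_im]
    nlinarith [mul_pos (sub_pos.mpr hcabs) (sub_pos.mpr hwabs)]
  have hden : (1 - (starRingEnd ℂ) c * w) ≠ 0 := by
    intro h0
    rw [h0] at hkey
    simpa using (Complex.normSq_nonneg (w - c)).trans_lt hkey
  have h2 : ‖w - c‖ ^ 2 < ‖1 - (starRingEnd ℂ) c * w‖ ^ 2 := by
    rw [← Complex.sq_norm, ← Complex.sq_norm] at hkey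
    exact hkey
  have hlt : ‖w - c‖ < ‖1 - (starRingEnd ℂ) c * w‖ :=
    lt_of_pow_lt_pow_left₀ 2 (norm_nonneg _) h2
  rw [norm_div, div_lt_one (norm_pos_iff.mpr hden)]
  exact hlt

theorem schur_one {F : ℂ → ℂ} {d : ℕ → ℂ} (hco : CoeffsOn 1 F d)
    (hb : ∀ z : ℂ, ‖z‖ < 1 → ‖F z‖ ≤ 1) : ‖d 1‖ ≤ 1 - ‖d 0‖ ^ 2 := by
  have hdiff := hco.differentiableOn one_pos
  have hF0 : F 0 = d 0 := hco.apply_zero one_pos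
  have hd0 : ‖d 0‖ ≤ 1 := by rw [← hF0]; exact hb 0 (by norm_num)
  rcases dichotomy hdiff hb with hstrict | hconst
  · set c := d 0 with hcdef
    have hc1 : ‖c‖ < 1 := by rw [← hF0]; exact hstrict 0 (by norm_num)
    have hden : ∀ z ∈ ball (0:ℂ) 1, (1 - (starRingEnd ℂ) c * F z) ≠ 0 := by
      intro z hz h0
      rw [mem_ball_zero_iff] at hz
      have hFz : ‖F z‖ ≤ 1 := hb z hz
      have h1 : ‖(starRingEnd ℂ) c * F z‖ < 1 := by
        rw [norm_mul, RCLike.norm_conj]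
        nlinarith [norm_nonneg (F z), norm_nonneg c]
      rw [sub_eq_zero] at h0
      rw [← h0] at h1
      simp at h1
    set G : ℂ → ℂ := fun z => (F z - c) / (1 - (starRingEnd ℂ) c * F z) with hGdef
    have hGdiff : DifferentiableOn ℂ G (ball 0 1) := by
      apply DifferentiableOn.div (hdiff.sub_const c)
        ((differentiableOn_const 1).sub ((differentiableOn_const _).mul hdiff)) hden
    have hG0 : G 0 = 0 := by simp [hGdef, hF0]
    have hmaps : MapsTo G (ball (0:ℂ) 1) (ball (G 0) 1) := by
      intro z hz
      rw [mem_ball_zero_iff] at hz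
      rw [hG0, mem_ball_zero_iff]
      exact moebius_lt_one hc1 (hstrict z hz)
    have hder := Complex.norm_deriv_le_div_of_mapsTo_ball hGdiff (hmaps.mono_right ball_subset_closedBall) one_pos
    -- compute deriv G 0
    have hF' : HasDerivAt F (d 1) 0 := hco.deriv_zero one_pos
    set q : ℂ := 1 - (starRingEnd ℂ) c * c with hqdef
    have hq0 : q = 1 - ((‖c‖:ℂ))^2 := by
      rw [hqdef, mul_comm, Complex.mul_conj]
      norm_cast
      rw [Complex.normSq_eq_norm_sq]
    have hpos : 0 < 1 - ‖c‖^2 := by nlinarith [norm_nonneg c]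
    have hqne : q ≠ 0 := by
      rw [hq0]
      intro h0
      have h0' : ((1 - ‖c‖^2 : ℝ) : ℂ) = 0 := by push_cast; linear_combination h0
      have : (1 - ‖c‖^2 : ℝ) = 0 := by exact_mod_cast h0'
      linarith
    have hGder : HasDerivAt G ((d 1 * (1 - (starRingEnd ℂ) c * F 0) -
        (F 0 - c) * (0 - (starRingEnd ℂ) c * d 1)) / (1 - (starRingEnd ℂ) c * F 0) ^ 2) 0 := by
      apply HasDerivAt.fun_div (hF'.sub_const c)
      · have := (hF'.const_mul ((starRingEnd ℂ) c)).const_sub 1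
        rw [zero_sub]
        exact this
      · exact hden 0 (by norm_num)
    have hval : deriv G 0 = d 1 / q := by
      rw [hGder.deriv, hF0, ← hqdef]
      rw [sub_self, zero_mul, sub_zero, sq, ← div_div, mul_div_cancel_right₀ _ hqne]
    rw [hval] at hder
    rw [norm_div, hq0] at hder
    have hnq : ‖((1:ℂ) - ((‖c‖:ℂ))^2)‖ = 1 - ‖c‖^2 := by
      have : ((1:ℂ) - ((‖c‖:ℂ))^2) = (((1 - ‖c‖^2 : ℝ)) : ℂ) := by push_cast; ring
      rw [this, Complex.norm_real, Real.norm_eq_abs, abs_of_nonneg (by nlinarith)]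
    rw [hnq] at hder
    norm_num at hder
    have : ‖d 1‖ ≤ 1 - ‖c‖^2 := (div_le_one hpos).mp hder
    simpa [hcdef] using this
  · have hdd : d = fun k => if k = 0 then F 0 else 0 := by
      apply hco.unique ((coeffsOn_const (F 0)).congr ?_) one_pos one_pos
      intro z hz
      exact (hconst z hz).symm
    have : d 1 = 0 := by rw [hdd]; simp
    rw [this]
    simp only [norm_zero]
    nlinarith [norm_nonneg (d 0)]
theorem schur_all {F : ℂ → ℂ} {d : ℕ → ℂ} (hco : CoeffsOn 1 F d)
    (hb : ∀ z : ℂ, ‖z‖ < 1 → ‖F z‖ ≤ 1) {n : ℕ} (hn : 1 ≤ n) :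
    ‖d n‖ ≤ 1 - ‖d 0‖ ^ 2 := by
  have hn0 : (n : ℂ) ≠ 0 := Nat.cast_ne_zero.mpr (by omega)
  set ζ : ℂ := Complex.exp (2 * Real.pi * Complex.I / n) with hζdef
  have hζ : IsPrimitiveRoot ζ n := Complex.isPrimitiveRoot_exp n (by omega)
  have hζnorm : ‖ζ‖ = 1 := by
    rw [hζdef, Complex.norm_exp]
    have : (2 * Real.pi * Complex.I / n).re = 0 := by
      simp [Complex.div_re]
    rw [this, Real.exp_zero]
  set u : ℕ → ℂ := fun m => d (n * m) with hudef
  set Ufn : ℂ → ℂ := fun x => ∑' m, u m * x ^ m with hUdef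
  have key : ∀ x : ℂ, ‖x‖ < 1 → HasSum (fun m => u m * x ^ m) (Ufn x) ∧ ‖Ufn x‖ ≤ 1 := by
    intro x hx
    obtain ⟨z, hzn⟩ := IsAlgClosed.exists_pow_nat_eq x (by omega : 0 < n)
    have hz1 : ‖z‖ < 1 := by
      by_contra hge
      push_neg at hge
      have h1 : (1:ℝ) ≤ ‖z‖ ^ n := one_le_pow₀ hge
      rw [← hzn, norm_pow] at hx
      linarith
    have hsum : ∀ j : ℕ, HasSum (fun k => d k * (ζ ^ j * z) ^ k) (F (ζ ^ j * z)) := by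
      intro j
      apply hco
      rw [norm_mul, norm_pow, hζnorm, one_pow, one_mul]
      exact hz1
    set S : ℂ := (n : ℂ)⁻¹ * ∑ j ∈ Finset.range n, F (ζ ^ j * z) with hSdef
    have havg : HasSum (fun k => (n:ℂ)⁻¹ * ∑ j ∈ Finset.range n, (d k * (ζ ^ j * z) ^ k)) S :=
      (hasSum_sum (fun j _ => hsum j)).mul_left _
    have hterm : ∀ k, (n:ℂ)⁻¹ * ∑ j ∈ Finset.range n, (d k * (ζ ^ j * z) ^ k)
        = if n ∣ k then d k * z ^ k else 0 := by
      intro k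
      have hrw : ∑ j ∈ Finset.range n, (d k * (ζ ^ j * z) ^ k)
          = (∑ j ∈ Finset.range n, (ζ ^ k) ^ j) * (d k * z ^ k) := by
        rw [Finset.sum_mul]
        apply Finset.sum_congr rfl
        intro j _
        rw [mul_pow, ← pow_mul, ← pow_mul, mul_comm k j, pow_mul]
        ring
      rw [hrw]
      by_cases hdvd : n ∣ k
      · rw [if_pos hdvd]
        have h1 : ζ ^ k = 1 := (hζ.pow_eq_one_iff_dvd k).mpr hdvd
        simp [h1, Finset.sum_const, Finset.card_range]
        rw [← mul_assoc, inv_mul_cancel₀ hn0, one_mul]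
      · rw [if_neg hdvd]
        have hne : ζ ^ k ≠ 1 := fun h => hdvd ((hζ.pow_eq_one_iff_dvd k).mp h)
        rw [geom_sum_eq hne]
        have h1 : (ζ ^ k) ^ n = 1 := by
          rw [← pow_mul, mul_comm, pow_mul, hζ.pow_eq_one, one_pow]
        rw [h1]
        simp
    rw [funext hterm] at havg
    have hreindex : HasSum (fun m : ℕ => u m * x ^ m) S := by
      have hinj : Function.Injective (fun m : ℕ => n * m) := fun a b h =>
        Nat.eq_of_mul_eq_mul_left (by omega) h
      have hvanish : ∀ k ∉ Set.range (fun m : ℕ => n * m),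
          (if n ∣ k then d k * z ^ k else 0) = 0 := by
        intro k hk
        rw [if_neg]
        intro ⟨m, hm⟩
        exact hk ⟨m, hm.symm⟩
      have hh := (Function.Injective.hasSum_iff hinj hvanish).mpr havg
      have hfun : ((fun k => if n ∣ k then d k * z ^ k else 0) ∘ fun m : ℕ => n * m)
          = fun m => u m * x ^ m := by
        funext m
        simp only [Function.comp_apply]
        rw [if_pos (dvd_mul_right n m), hudef, ← hzn, ← pow_mul]
      rwa [hfun] at hh
    refine ⟨hreindex.summable.hasSum, ?_⟩
    have hUS : Ufn x = S := hreindex.tsum_eq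
    rw [hUS, hSdef, norm_mul, norm_inv]
    have hbound : ‖∑ j ∈ Finset.range n, F (ζ ^ j * z)‖ ≤ (n : ℝ) := by
      apply le_trans (norm_sum_le _ _)
      have : ∀ j ∈ Finset.range n, ‖F (ζ ^ j * z)‖ ≤ 1 := by
        intro j _
        apply hb
        rw [norm_mul, norm_pow, hζnorm, one_pow, one_mul]
        exact hz1
      calc ∑ j ∈ Finset.range n, ‖F (ζ ^ j * z)‖ ≤ ∑ j ∈ Finset.range n, 1 :=
            Finset.sum_le_sum this
        _ = n := by simp
    have hnn : ‖(n:ℂ)‖ = (n:ℝ) := by simp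
    rw [hnn]
    calc ((n:ℝ))⁻¹ * ‖∑ j ∈ Finset.range n, F (ζ ^ j * z)‖ ≤ ((n:ℝ))⁻¹ * n := by
          apply mul_le_mul_of_nonneg_left hbound (by positivity)
      _ = 1 := by field_simp
  have hcoU : CoeffsOn 1 Ufn u := fun x hx => (key x hx).1
  have hbU : ∀ x : ℂ, ‖x‖ < 1 → ‖Ufn x‖ ≤ 1 := fun x hx => (key x hx).2
  have := schur_one hcoU hbU
  simpa [hudef] using this

/-! ### Cauchy products and shifts of coefficient sequences -/

/-- Cauchy product (convolution) of coefficient sequences. -/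
noncomputable def conv (d e : ℕ → ℂ) : ℕ → ℂ := fun n => ∑ kl ∈ Finset.HasAntidiagonal.antidiagonal n, d kl.1 * e kl.2

theorem CoeffsOn.mul {R : ℝ} {F G : ℂ → ℂ} {d e : ℕ → ℂ}
    (hF : CoeffsOn R F d) (hG : CoeffsOn R G e) :
    CoeffsOn R (fun z => F z * G z) (conv d e) := by
  intro z hz
  have hFs := hF z hz
  have hGs := hG z hz
  have hFn : Summable fun k => ‖d k * z ^ k‖ := summable_norm_iff.mpr hFs.summable
  have hGn : Summable fun k => ‖e k * z ^ k‖ := summable_norm_iff.mpr hGs.summable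
  have h1 := summable_norm_sum_mul_antidiagonal_of_summable_norm hFn hGn
  have h2 := Summable.of_norm h1
  have h3 := tsum_mul_tsum_eq_tsum_sum_antidiagonal_of_summable_norm hFn hGn
  rw [hFs.tsum_eq, hGs.tsum_eq] at h3
  have hhs := h2.hasSum_iff.mpr h3.symm
  refine hhs.congr_fun ?_
  intro n
  rw [conv, Finset.sum_mul]
  apply Finset.sum_congr rfl
  intro kl hkl
  have hkln : kl.1 + kl.2 = n := Finset.HasAntidiagonal.mem_antidiagonal.mp hkl
  rw [← hkln, pow_add]
  ring

/-- Shift of a coefficient sequence (multiplication by `z ^ k`). -/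
def shift (k : ℕ) (d : ℕ → ℂ) : ℕ → ℂ := fun n => if k ≤ n then d (n - k) else 0

theorem CoeffsOn.shift_pow {R : ℝ} {F : ℂ → ℂ} {d : ℕ → ℂ} (hF : CoeffsOn R F d) (k : ℕ) :
    CoeffsOn R (fun z => z ^ k * F z) (shift k d) := by
  intro z hz
  have h1 : HasSum (fun m => z ^ k * (d m * z ^ m)) (z ^ k * F z) := (hF z hz).mul_left _
  have hinj : Function.Injective (fun m : ℕ => m + k) := fun a b h => Nat.add_right_cancel h
  have hvanish : ∀ n ∉ Set.range (fun m : ℕ => m + k), shift k d n * z ^ n = 0 := by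
    intro n hn
    have hnk : ¬ k ≤ n := fun hkn => hn ⟨n - k, by show n - k + k = n; omega⟩
    rw [shift, if_neg hnk, zero_mul]
  apply (Function.Injective.hasSum_iff hinj hvanish).mp
  have hfun : ((fun n => shift k d n * z ^ n) ∘ fun m : ℕ => m + k)
      = fun m => z ^ k * (d m * z ^ m) := by
    funext m
    simp only [Function.comp_apply, shift]
    rw [if_pos (by omega : k ≤ m + k)]
    have : m + k - k = m := by omega
    rw [this, pow_add]
    ring
  rwa [hfun]

theorem shift_eq_zero_of_lt {k n : ℕ} (h : n < k) (d : ℕ → ℂ) : shift k d n = 0 := by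
  rw [shift, if_neg (by omega)]

/-! ### The weighted coefficient norm -/

/-- Weighted `ℓ¹`-norm of a coefficient sequence, valued in `ℝ≥0∞`. -/
noncomputable def wnorm (ψ : ℕ → ℝ) (d : ℕ → ℂ) : ENNReal := ∑' k, ENNReal.ofReal (‖d k‖ * ψ k)

theorem wnorm_conv {ψ : ℕ → ℝ} (hψ0 : ∀ n, 0 ≤ ψ n)
    (hψm : ∀ m n, ψ (m + n) ≤ ψ m * ψ n) (d e : ℕ → ℂ) :
    wnorm ψ (conv d e) ≤ wnorm ψ d * wnorm ψ e := by
  have hterm : ∀ n, ENNReal.ofReal (‖conv d e n‖ * ψ n) ≤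
      ∑ kl ∈ Finset.HasAntidiagonal.antidiagonal n,
        ENNReal.ofReal ((‖d kl.1‖ * ψ kl.1) * (‖e kl.2‖ * ψ kl.2)) := by
    intro n
    rw [← ENNReal.ofReal_sum_of_nonneg (fun kl _ =>
      mul_nonneg (mul_nonneg (norm_nonneg _) (hψ0 _)) (mul_nonneg (norm_nonneg _) (hψ0 _)))]
    apply ENNReal.ofReal_le_ofReal
    calc ‖conv d e n‖ * ψ n
        ≤ (∑ kl ∈ Finset.HasAntidiagonal.antidiagonal n, ‖d kl.1‖ * ‖e kl.2‖) * ψ n := by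
          apply mul_le_mul_of_nonneg_right _ (hψ0 n)
          refine le_trans (norm_sum_le _ _) ?_
          apply Finset.sum_le_sum
          intro kl _
          rw [norm_mul]
      _ = ∑ kl ∈ Finset.HasAntidiagonal.antidiagonal n, ‖d kl.1‖ * ‖e kl.2‖ * ψ n := Finset.sum_mul _ _ _
      _ ≤ ∑ kl ∈ Finset.HasAntidiagonal.antidiagonal n, (‖d kl.1‖ * ψ kl.1) * (‖e kl.2‖ * ψ kl.2) := by
          apply Finset.sum_le_sum
          intro kl hkl
          have hkln : kl.1 + kl.2 = n := Finset.HasAntidiagonal.mem_antidiagonal.mp hkl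
          have hψn : ψ n ≤ ψ kl.1 * ψ kl.2 := hkln ▸ hψm kl.1 kl.2
          have h1 : ‖d kl.1‖ * ‖e kl.2‖ * ψ n ≤ ‖d kl.1‖ * ‖e kl.2‖ * (ψ kl.1 * ψ kl.2) :=
            mul_le_mul_of_nonneg_left hψn (by positivity)
          calc ‖d kl.1‖ * ‖e kl.2‖ * ψ n ≤ ‖d kl.1‖ * ‖e kl.2‖ * (ψ kl.1 * ψ kl.2) := h1
            _ = (‖d kl.1‖ * ψ kl.1) * (‖e kl.2‖ * ψ kl.2) := by ring
  calc wnorm ψ (conv d e)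
      ≤ ∑' n, ∑ kl ∈ Finset.HasAntidiagonal.antidiagonal n,
          ENNReal.ofReal ((‖d kl.1‖ * ψ kl.1) * (‖e kl.2‖ * ψ kl.2)) :=
        ENNReal.tsum_le_tsum hterm
    _ = ∑' (p : ℕ × ℕ), ENNReal.ofReal ((‖d p.1‖ * ψ p.1) * (‖e p.2‖ * ψ p.2)) := by
        set H : ℕ × ℕ → ENNReal :=
          fun p => ENNReal.ofReal ((‖d p.1‖ * ψ p.1) * (‖e p.2‖ * ψ p.2)) with hH
        have h1 : ∀ n : ℕ, ∑ kl ∈ Finset.HasAntidiagonal.antidiagonal n, H kl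
            = ∑' kl : {x // x ∈ Finset.HasAntidiagonal.antidiagonal n}, H kl.1 :=
          fun n => (Finset.tsum_subtype _ _).symm
        simp_rw [h1]
        rw [← ENNReal.tsum_sigma' (fun p : Σ n : ℕ, {x // x ∈ Finset.HasAntidiagonal.antidiagonal n} => H p.2)]
        exact Finset.HasAntidiagonal.sigmaAntidiagonalEquivProd.tsum_eq H
    _ = wnorm ψ d * wnorm ψ e := by
        rw [ENNReal.tsum_prod']
        have : ∀ a b : ℕ, ENNReal.ofReal ((‖d a‖ * ψ a) * (‖e b‖ * ψ b))
            = ENNReal.ofReal (‖d a‖ * ψ a) * ENNReal.ofReal (‖e b‖ * ψ b) :=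
          fun a b => ENNReal.ofReal_mul (mul_nonneg (norm_nonneg _) (hψ0 _))
        simp_rw [this]
        rw [wnorm, wnorm]
        simp_rw [ENNReal.tsum_mul_left, ENNReal.tsum_mul_right]

theorem wnorm_shift {ψ : ℕ → ℝ} (hψ0 : ∀ n, 0 ≤ ψ n)
    (hψm : ∀ m n, ψ (m + n) ≤ ψ m * ψ n) (k : ℕ) (d : ℕ → ℂ) :
    wnorm ψ (shift k d) ≤ ENNReal.ofReal (ψ k) * wnorm ψ d := by
  have hinj : Function.Injective (fun m : ℕ => m + k) := fun a b h => Nat.add_right_cancel h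
  have hsupp : Function.support (fun n => ENNReal.ofReal (‖shift k d n‖ * ψ n))
      ⊆ Set.range (fun m : ℕ => m + k) := by
    intro n hn
    by_contra hr
    have hnk : n < k := by
      by_contra hge
      exact hr ⟨n - k, by show n - k + k = n; omega⟩
    rw [Function.mem_support] at hn
    apply hn
    rw [shift_eq_zero_of_lt hnk]
    simp
  rw [wnorm, ← Function.Injective.tsum_eq hinj hsupp]
  have hps : ∀ m : ℕ, shift k d (m + k) = d m := by
    intro m
    rw [shift, if_pos (by omega : k ≤ m + k)]
    congr 1
    omega
  calc ∑' m, ENNReal.ofReal (‖shift k d (m + k)‖ * ψ (m + k))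
      ≤ ∑' m, ENNReal.ofReal (ψ k) * ENNReal.ofReal (‖d m‖ * ψ m) := by
        apply ENNReal.tsum_le_tsum
        intro m
        rw [hps m, ← ENNReal.ofReal_mul (hψ0 k)]
        apply ENNReal.ofReal_le_ofReal
        calc ‖d m‖ * ψ (m + k) ≤ ‖d m‖ * (ψ m * ψ k) :=
              mul_le_mul_of_nonneg_left (hψm m k) (norm_nonneg _)
          _ = ψ k * (‖d m‖ * ψ m) := by ring
    _ = ENNReal.ofReal (ψ k) * wnorm ψ d := ENNReal.tsum_mul_left

theorem wnorm_delta {ψ : ℕ → ℝ} (c : ℂ) :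
    wnorm ψ (fun k => if k = 0 then c else 0) = ENNReal.ofReal (‖c‖ * ψ 0) := by
  rw [wnorm]
  rw [tsum_eq_single 0 (by intro b hb; simp [hb])]
  simp

/-- The key Schur-type estimate: the weighted norm of the coefficients of a self-map
of the disk is at most 1. -/
theorem wnorm_le_one {ψ : ℕ → ℝ} (hψ0 : ∀ n, 0 ≤ ψ n) (hψ1 : ψ 0 = 1)
    (hψs : Summable ψ) (hcond : 2 * ∑' n, ψ (n + 1) ≤ 1) {d : ℕ → ℂ}
    (h0 : ‖d 0‖ ≤ 1) (hs : ∀ n, 1 ≤ n → ‖d n‖ ≤ 1 - ‖d 0‖ ^ 2) :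
    wnorm ψ d ≤ 1 := by
  set t := ‖d 0‖ with ht
  set Φ := ∑' n, ψ (n + 1) with hΦ
  have hΦ0 : 0 ≤ Φ := tsum_nonneg (fun n => hψ0 _)
  have ht0 : 0 ≤ t := norm_nonneg _
  have ht2 : 0 ≤ 1 - t ^ 2 := by nlinarith
  have hψs' : Summable fun n => ψ (n + 1) := (summable_nat_add_iff 1).mpr hψs
  have hsplit : wnorm ψ d = ENNReal.ofReal (‖d 0‖ * ψ 0)
      + ∑' n, ENNReal.ofReal (‖d (n + 1)‖ * ψ (n + 1)) :=
    tsum_eq_zero_add' ENNReal.summable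
  rw [hsplit, hψ1, mul_one]
  have hterm : ∀ n, ENNReal.ofReal (‖d (n + 1)‖ * ψ (n + 1))
      ≤ ENNReal.ofReal ((1 - t ^ 2) * ψ (n + 1)) := by
    intro n
    apply ENNReal.ofReal_le_ofReal
    exact mul_le_mul_of_nonneg_right (hs (n + 1) (by omega)) (hψ0 _)
  have htail : ∑' n, ENNReal.ofReal (‖d (n + 1)‖ * ψ (n + 1))
      ≤ ENNReal.ofReal ((1 - t ^ 2) * Φ) := by
    refine le_trans (ENNReal.tsum_le_tsum hterm) ?_
    rw [← ENNReal.ofReal_tsum_of_nonneg (fun n => mul_nonneg ht2 (hψ0 _)) (hψs'.mul_left _),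
      tsum_mul_left]
  refine le_trans (add_le_add_right htail _) ?_
  rw [← ENNReal.ofReal_add ht0 (mul_nonneg ht2 hΦ0)]
  rw [ENNReal.ofReal_le_one]
  nlinarith [sq_nonneg (1 - t), mul_le_mul_of_nonneg_left (by linarith : Φ ≤ 1/2) ht2]


/-! ### Existence of Taylor coefficients -/

theorem ball_eq_setOf : ball (0:ℂ) 1 = {z : ℂ | ‖z‖ < 1} := by
  ext z
  simp [mem_ball_zero_iff]

theorem exists_coeffs {F : ℂ → ℂ} (hd : DifferentiableOn ℂ F {z : ℂ | ‖z‖ < 1}) :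
    ∃ d : ℕ → ℂ, CoeffsOn 1 F d := by
  refine ⟨fun n => ((n.factorial : ℕ) : ℂ)⁻¹ * iteratedDeriv n F 0, ?_⟩
  intro z hz
  have hd' : DifferentiableOn ℂ F (ball 0 1) := ball_eq_setOf ▸ hd
  have := Complex.hasSum_taylorSeries_on_ball hd' (mem_ball_zero_iff.mpr hz)
  apply this.congr_fun
  intro n
  simp only [smul_eq_mul, sub_zero]
  ring

/-! ### wnorm helper lemmas -/

theorem summable_of_wnorm_ne_top {ψ : ℕ → ℝ} (hψ0 : ∀ n, 0 ≤ ψ n) {d : ℕ → ℂ}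
    (h : wnorm ψ d ≠ ⊤) : Summable fun n => ‖d n‖ * ψ n := by
  have h2 := ENNReal.summable_toReal h
  apply h2.congr
  intro n
  rw [ENNReal.toReal_ofReal (mul_nonneg (norm_nonneg _) (hψ0 n))]

theorem wnorm_le_tsum {ψ : ℕ → ℝ} (hψ0 : ∀ n, 0 ≤ ψ n) (hψs : Summable ψ) {d : ℕ → ℂ}
    (hd : ∀ n, ‖d n‖ ≤ 1) : wnorm ψ d ≤ ENNReal.ofReal (∑' n, ψ n) := by
  rw [ENNReal.ofReal_tsum_of_nonneg hψ0 hψs]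
  apply ENNReal.tsum_le_tsum
  intro n
  apply ENNReal.ofReal_le_ofReal
  calc ‖d n‖ * ψ n ≤ 1 * ψ n := mul_le_mul_of_nonneg_right (hd n) (hψ0 n)
    _ = ψ n := one_mul _

theorem tsum_le_of_wnorm_le {ψ : ℕ → ℝ} (hψ0 : ∀ n, 0 ≤ ψ n) {d : ℕ → ℂ} {Cq : ℝ}
    (hC : 0 ≤ Cq) (h : wnorm ψ d ≤ ENNReal.ofReal Cq) :
    Summable (fun n => ‖d n‖ * ψ n) ∧ (∑' n, ‖d n‖ * ψ n) ≤ Cq := by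
  have hne : wnorm ψ d ≠ ⊤ := (h.trans_lt ENNReal.ofReal_lt_top).ne
  have hs := summable_of_wnorm_ne_top hψ0 hne
  refine ⟨hs, ?_⟩
  rw [← ENNReal.ofReal_le_ofReal_iff hC, ENNReal.ofReal_tsum_of_nonneg
    (fun n => mul_nonneg (norm_nonneg _) (hψ0 n)) hs]
  exact h

/-! ### The factorization `ω z = z * Ufn z` -/

theorem omega_decomp {ω : ℂ → ℂ} (hωd : DifferentiableOn ℂ ω {z : ℂ | ‖z‖ < 1})
    (hωb : ∀ z : ℂ, ‖z‖ < 1 → ‖ω z‖ ≤ 1) (hω0 : ω 0 = 0) :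
    ∃ (Ufn : ℂ → ℂ) (u : ℕ → ℂ), CoeffsOn 1 Ufn u ∧ (∀ z : ℂ, ‖z‖ < 1 → ‖Ufn z‖ ≤ 1) ∧
      (∀ z : ℂ, ‖z‖ < 1 → ω z = z * Ufn z) := by
  obtain ⟨v, hcoω⟩ := exists_coeffs hωd
  have hv0 : v 0 = 0 := by
    have h1 := hcoω.apply_zero one_pos
    rw [hω0] at h1
    exact h1.symm
  have hωdiff : DifferentiableOn ℂ ω (ball 0 1) := ball_eq_setOf ▸ hωd
  have hmaps : MapsTo ω (ball (0:ℂ) 1) (ball (0:ℂ) 1) := by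
    rcases dichotomy hωdiff hωb with hstrict | hconst
    · intro z hz
      rw [mem_ball_zero_iff] at hz ⊢
      exact hstrict z hz
    · intro z hz
      rw [mem_ball_zero_iff] at hz ⊢
      rw [hconst z hz, hω0]
      norm_num
  have hSchwarz : ∀ z : ℂ, ‖z‖ < 1 → ‖ω z‖ ≤ ‖z‖ := by
    intro z hz
    have h1 := Complex.norm_le_norm_of_mapsTo_ball hωdiff (hmaps.mono_right ball_subset_closedBall) hω0 hz
    simpa using h1
  set u : ℕ → ℂ := fun m => v (m + 1) with hudef
  have key : ∀ z : ℂ, ‖z‖ < 1 → z ≠ 0 → HasSum (fun k => u k * z ^ k) (ω z / z) := by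
    intro z hz hz0
    have h := hcoω z hz
    have hvan : ∀ k ∉ Set.range Nat.succ, v k * z ^ k = 0 := by
      intro k hk
      have hk0 : k = 0 := by
        rcases k with _ | k
        · rfl
        · exact absurd ⟨k, rfl⟩ hk
      simp [hk0, hv0]
    have h1 : HasSum (fun k => v (k + 1) * z ^ (k + 1)) (ω z) := by
      have h2 := (Function.Injective.hasSum_iff Nat.succ_injective hvan).mpr h
      exact h2.congr_fun (fun k => rfl)
    have h2 := h1.div_const z
    apply h2.congr_fun
    intro k
    rw [hudef]
    rw [pow_succ, ← mul_assoc, mul_div_cancel_right₀ _ hz0]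
  set Ufn : ℂ → ℂ := fun z => ∑' m, u m * z ^ m with hUdef
  have hU0 : Ufn 0 = u 0 := by
    rw [hUdef]
    simp only []
    rw [tsum_eq_single 0 (by intro b hb; simp [zero_pow hb])]
    simp
  have hcoU : CoeffsOn 1 Ufn u := by
    intro z hz
    by_cases hz0 : z = 0
    · subst hz0
      rw [hU0]
      have h3 := hasSum_single (f := fun k : ℕ => u k * (0:ℂ) ^ k) 0
        (by intro b hb; simp [zero_pow hb])
      simpa using h3
    · have h4 := key z hz hz0
      have hUz : Ufn z = ω z / z := h4.tsum_eq
      exact hUz ▸ h4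
  have hfac : ∀ z : ℂ, ‖z‖ < 1 → ω z = z * Ufn z := by
    intro z hz
    by_cases hz0 : z = 0
    · subst hz0
      rw [hω0, zero_mul]
    · have hUz : Ufn z = ω z / z := (key z hz hz0).tsum_eq
      rw [hUz]
      field_simp
  have hUb : ∀ z : ℂ, ‖z‖ < 1 → ‖Ufn z‖ ≤ 1 := by
    intro z hz
    by_cases hz0 : z = 0
    · subst hz0
      rw [hU0]
      have hder : deriv ω 0 = v 1 := (hcoω.deriv_zero one_pos).deriv
      have h5 := Complex.norm_deriv_le_one_of_mapsTo_ball hωdiff (by rw [hω0]; exact hmaps.mono_right ball_subset_closedBall) one_pos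
      rw [hder] at h5
      simpa using h5
    · have hUz : Ufn z = ω z / z := (key z hz hz0).tsum_eq
      rw [hUz, norm_div]
      rw [div_le_one (norm_pos_iff.mpr hz0)]
      exact hSchwarz z hz
  exact ⟨Ufn, u, hcoU, hUb, hfac⟩

/-! ### Coefficients of powers -/

noncomputable def pw (u : ℕ → ℂ) : ℕ → ℕ → ℂ
  | 0 => fun n => if n = 0 then 1 else 0
  | (k + 1) => conv u (pw u k)

theorem coeffsOn_pow {Ufn : ℂ → ℂ} {u : ℕ → ℂ} (hcoU : CoeffsOn 1 Ufn u) (k : ℕ) :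
    CoeffsOn 1 (fun z => (Ufn z) ^ k) (pw u k) := by
  induction k with
  | zero => exact (coeffsOn_const 1).congr (fun z _ => (pow_zero _).symm)
  | succ k ih =>
      have h1 : CoeffsOn 1 (fun z => Ufn z * (Ufn z) ^ k) (conv u (pw u k)) := hcoU.mul ih
      exact h1.congr (fun z _ => (pow_succ' _ _).symm)

theorem wnorm_pw_le {ψ : ℕ → ℝ} (hψ0 : ∀ n, 0 ≤ ψ n)
    (hψm : ∀ m n, ψ (m + n) ≤ ψ m * ψ n) (hψ1 : ψ 0 = 1) {u : ℕ → ℂ} {B : ENNReal}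
    (hu : wnorm ψ u ≤ B) (k : ℕ) : wnorm ψ (pw u k) ≤ B ^ k := by
  induction k with
  | zero =>
      rw [pow_zero]
      have h1 : wnorm ψ (pw u 0) = ENNReal.ofReal (‖(1:ℂ)‖ * ψ 0) := wnorm_delta 1
      rw [h1, hψ1]
      simp
  | succ k ih =>
      calc wnorm ψ (pw u (k + 1)) = wnorm ψ (conv u (pw u k)) := rfl
        _ ≤ wnorm ψ u * wnorm ψ (pw u k) := wnorm_conv hψ0 hψm _ _
        _ ≤ B * B ^ k := mul_le_mul' hu ih
        _ = B ^ (k + 1) := (pow_succ' B k).symm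

end BohrQS

open BohrQS

set_option maxHeartbeats 3000000 in
/-- Weighted Bohr inequality for quasi-subordination (Theorem 4): if
`f = W · (g ∘ ω)` with `W, ω` analytic self-maps of the disk bounded by 1 and
`ω(0) = 0`, and `{φₙ}` is a submultiplicative weight sequence with `φ₀ ≡ 1`,
then `Σ |a_k| φ_k(r) ≤ Σ |b_k| φ_k(r)` whenever `1 ≥ 2 Σ_{n≥1} φₙ(r)`. -/
theorem bohr_quasi_subordination (f g : ℂ → ℂ) (a b : ℕ → ℂ) (W ω : ℂ → ℂ)
    (φ : ℕ → ℝ → ℝ)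
    (hf : ∀ z : ℂ, ‖z‖ < 1 → HasSum (fun k : ℕ => a k * z ^ k) (f z))
    (hg : ∀ z : ℂ, ‖z‖ < 1 → HasSum (fun k : ℕ => b k * z ^ k) (g z))
    (hWd : DifferentiableOn ℂ W {z : ℂ | ‖z‖ < 1})
    (hWb : ∀ z : ℂ, ‖z‖ < 1 → ‖W z‖ ≤ 1)
    (hωd : DifferentiableOn ℂ ω {z : ℂ | ‖z‖ < 1})
    (hωb : ∀ z : ℂ, ‖z‖ < 1 → ‖ω z‖ ≤ 1)
    (hω0 : ω 0 = 0)
    (hq : ∀ z : ℂ, ‖z‖ < 1 → f z = W z * g (ω z))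
    (hφ0 : ∀ n : ℕ, ∀ x : ℝ, 0 ≤ x → x < 1 → 0 ≤ φ n x)
    (hφc : ∀ n : ℕ, ContinuousOn (φ n) (Set.Ico 0 1))
    (hφone : ∀ x : ℝ, 0 ≤ x → x < 1 → φ 0 x = 1)
    (hφu : TendstoLocallyUniformlyOn
      (fun (N : ℕ) (x : ℝ) => ∑ n ∈ Finset.range N, φ n x)
      (fun x => ∑' n : ℕ, φ n x) atTop (Set.Ico (0 : ℝ) 1))
    (hφs : ∀ x : ℝ, 0 ≤ x → x < 1 → Summable fun n : ℕ => φ n x)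
    (hφm : ∀ m n : ℕ, ∀ x : ℝ, 0 ≤ x → x < 1 → φ (m + n) x ≤ φ m x * φ n x)
    (r : ℝ) (hr0 : 0 ≤ r) (hr : r < 1)
    (hcond : 1 ≥ 2 * ∑' n : ℕ, φ (n + 1) r) :
    ∑' k : ℕ, ENNReal.ofReal (‖a k‖ * φ k r) ≤
      ∑' k : ℕ, ENNReal.ofReal (‖b k‖ * φ k r) := by
  set ψ : ℕ → ℝ := fun n => φ n r with hψdef
  have hψ0 : ∀ n, 0 ≤ ψ n := fun n => hφ0 n r hr0 hr
  have hψm : ∀ m n, ψ (m + n) ≤ ψ m * ψ n := fun m n => hφm m n r hr0 hr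
  have hψ1 : ψ 0 = 1 := hφone r hr0 hr
  have hψs : Summable ψ := hφs r hr0 hr
  have hψcond : 2 * ∑' n, ψ (n + 1) ≤ 1 := hcond
  obtain ⟨w, hcoW⟩ := exists_coeffs hWd
  obtain ⟨Ufn, u, hcoU, hUb, hfac⟩ := omega_decomp hωd hωb hω0
  have hcof : CoeffsOn 1 f a := hf
  -- Schur bounds
  have hW0 : ‖w 0‖ ≤ 1 := by
    rw [← hcoW.apply_zero one_pos]
    exact hWb 0 (by norm_num)
  have hwnormW : wnorm ψ w ≤ 1 :=
    wnorm_le_one hψ0 hψ1 hψs hψcond hW0 (fun n hn => schur_all hcoW hWb hn)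
  have hU0 : ‖u 0‖ ≤ 1 := by
    rw [← hcoU.apply_zero one_pos]
    exact hUb 0 (by norm_num)
  have hUn : ∀ n, 1 ≤ n → ‖u n‖ ≤ 1 - ‖u 0‖ ^ 2 := fun n hn => schur_all hcoU hUb hn
  have hwnormU : wnorm ψ u ≤ 1 := wnorm_le_one hψ0 hψ1 hψs hψcond hU0 hUn
  have hu1 : ∀ m, ‖u m‖ ≤ 1 := by
    intro m
    rcases Nat.eq_zero_or_pos m with hm | hm
    · rw [hm]; exact hU0
    · exact le_trans (hUn m hm) (by nlinarith [norm_nonneg (u 0)])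
  have hwpwψ : ∀ k, wnorm ψ (pw u k) ≤ 1 := by
    intro k
    have := wnorm_pw_le hψ0 hψm hψ1 hwnormU k
    rwa [one_pow] at this
  set e' : ℕ → ℕ → ℂ := fun k => shift k (pw u k) with he'def
  have hcoωk : ∀ k, CoeffsOn 1 (fun z => (ω z) ^ k) (e' k) := by
    intro k
    have h1 : CoeffsOn 1 (fun z => z ^ k * (Ufn z) ^ k) (shift k (pw u k)) :=
      (coeffsOn_pow hcoU k).shift_pow k
    apply h1.congr
    intro z hz
    rw [← mul_pow, ← hfac z hz]
  have he'wn : ∀ k, wnorm ψ (e' k) ≤ ENNReal.ofReal (ψ k) := by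
    intro k
    calc wnorm ψ (e' k) ≤ ENNReal.ofReal (ψ k) * wnorm ψ (pw u k) := wnorm_shift hψ0 hψm k _
      _ ≤ ENNReal.ofReal (ψ k) * 1 := mul_le_mul_right (hwpwψ k) _
      _ = ENNReal.ofReal (ψ k) := mul_one _
  set c : ℕ → ℂ := fun n => ∑ k ∈ Finset.range (n + 1), b k * e' k n with hcdef
  -- coefficients of `g ∘ ω` on the ball of radius 1/2
  have hcoh : CoeffsOn (1/2 : ℝ) (fun z => g (ω z)) c := by
    intro z hz
    set s := ‖z‖ with hs
    have hs0 : 0 ≤ s := norm_nonneg z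
    have hs2 : s < 1/2 := hz
    have hs1 : s < 1 := by linarith
    set q : ℝ := s / (1 - s) with hqdef
    have hq0 : 0 ≤ q := div_nonneg hs0 (by linarith)
    have hq1 : q < 1 := by
      rw [div_lt_one (by linarith)]
      linarith
    set ψs : ℕ → ℝ := fun n => s ^ n with hψsdef
    have hψs0 : ∀ n, 0 ≤ ψs n := fun n => pow_nonneg hs0 n
    have hψsm : ∀ m n, ψs (m + n) ≤ ψs m * ψs n := fun m n => le_of_eq (pow_add s m n)
    have hψs1 : ψs 0 = 1 := pow_zero s
    have hψssum : Summable ψs := summable_geometric_of_lt_one hs0 hs1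
    have htsumψs : ∑' n, ψs n = (1 - s)⁻¹ := tsum_geometric_of_lt_one hs0 hs1
    have hwU : wnorm ψs u ≤ ENNReal.ofReal ((1 - s)⁻¹) :=
      htsumψs ▸ wnorm_le_tsum hψs0 hψssum hu1
    have hwe' : ∀ k, wnorm ψs (e' k) ≤ ENNReal.ofReal (q ^ k) := by
      intro k
      calc wnorm ψs (e' k) ≤ ENNReal.ofReal (ψs k) * wnorm ψs (pw u k) :=
            wnorm_shift hψs0 hψsm k _
        _ ≤ ENNReal.ofReal (ψs k) * (ENNReal.ofReal ((1 - s)⁻¹)) ^ k :=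
            mul_le_mul_right (wnorm_pw_le hψs0 hψsm hψs1 hwU k) _
        _ = ENNReal.ofReal (q ^ k) := by
            rw [← ENNReal.ofReal_pow (inv_nonneg.mpr (by linarith : (0:ℝ) ≤ 1 - s)), ← ENNReal.ofReal_mul (hψs0 k)]
            congr 1
            rw [hqdef, div_eq_mul_inv, mul_pow]
    have hbnd : ∀ k, Summable (fun n => ‖e' k n‖ * ψs n) ∧ (∑' n, ‖e' k n‖ * ψs n) ≤ q ^ k :=
      fun k => tsum_le_of_wnorm_le hψs0 (by positivity) (hwe' k)
    set P : ℕ × ℕ → ℂ := fun p => b p.1 * (e' p.1 p.2 * z ^ p.2) with hPdef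
    have hnn : ∀ p : ℕ × ℕ, ‖P p‖ = ‖b p.1‖ * (‖e' p.1 p.2‖ * ψs p.2) := by
      intro p
      rw [hPdef]
      simp only []
      rw [norm_mul, norm_mul, norm_pow]
    have hPsum : Summable fun p : ℕ × ℕ => ‖P p‖ := by
      have hbig : Summable fun p : ℕ × ℕ => ‖b p.1‖ * (‖e' p.1 p.2‖ * ψs p.2) := by
        apply (summable_prod_of_nonneg (fun p => by positivity)).mpr
        constructor
        · intro k
          exact (((hbnd k).1).mul_left ‖b k‖).congr (fun n => rfl)
        · set ρ' : ℝ := (1 + q) / 2 with hρdef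
          have hρq : q ≤ ρ' := by rw [hρdef]; linarith
          have hρ1 : ρ' < 1 := by rw [hρdef]; linarith
          have hρ0 : 0 ≤ ρ' := by rw [hρdef]; linarith
          have hbρ : Summable fun k => ‖b k‖ * ρ' ^ k := by
            have h6 := (hg ((ρ' : ℝ) : ℂ)
              (by simpa [Complex.norm_real, abs_of_nonneg hρ0] using hρ1)).summable
            have h7 := summable_norm_iff.mpr h6
            apply h7.congr
            intro k
            rw [norm_mul, norm_pow, Complex.norm_real, Real.norm_eq_abs, abs_of_nonneg hρ0]
          apply Summable.of_nonneg_of_le (fun k => ?_) (fun k => ?_) hbρ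
          · exact tsum_nonneg (fun n => by positivity)
          · calc ∑' n, ‖b k‖ * (‖e' k n‖ * ψs n) = ‖b k‖ * ∑' n, (‖e' k n‖ * ψs n) :=
                  tsum_mul_left
              _ ≤ ‖b k‖ * q ^ k :=
                  mul_le_mul_of_nonneg_left (hbnd k).2 (norm_nonneg _)
              _ ≤ ‖b k‖ * ρ' ^ k :=
                  mul_le_mul_of_nonneg_left (pow_le_pow_left₀ hq0 hρq k) (norm_nonneg _)
      exact hbig.congr (fun p => (hnn p).symm)
    have hP : Summable P := hPsum.of_norm
    have hωz : ‖ω z‖ < 1 := by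
      rw [hfac z hs1, norm_mul]
      calc ‖z‖ * ‖Ufn z‖ ≤ ‖z‖ * 1 := mul_le_mul_of_nonneg_left (hUb z hs1) (norm_nonneg z)
        _ = ‖z‖ := mul_one _
        _ < 1 := hs1
    have hgsum : HasSum (fun k => b k * (ω z) ^ k) (g (ω z)) := hg (ω z) hωz
    have hωk : ∀ k, HasSum (fun n => e' k n * z ^ n) ((ω z) ^ k) := fun k => hcoωk k z hs1
    have hPs : HasSum P (∑' p, P p) := hP.hasSum
    have hfib1 : ∀ k, HasSum (fun n => P (k, n)) (b k * (ω z) ^ k) := by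
      intro k
      exact ((hωk k).mul_left (b k))
    have htotal : HasSum (fun k => b k * (ω z) ^ k) (∑' p, P p) :=
      HasSum.prod_fiberwise hPs hfib1
    have hSP : ∑' p, P p = g (ω z) := htotal.unique hgsum
    rw [hSP] at hPs
    have hQs : HasSum (fun p : ℕ × ℕ => P (p.2, p.1)) (g (ω z)) := by
      have := ((Equiv.prodComm ℕ ℕ).hasSum_iff (f := P) (a := g (ω z))).mpr hPs
      exact this.congr_fun (fun p => rfl)
    have hfib2 : ∀ n, HasSum (fun k => P (k, n)) (c n * z ^ n) := by
      intro n
      have hvan : ∀ k ∉ Finset.range (n + 1), P (k, n) = 0 := by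
        intro k hk
        have hnk : n < k := by
          simp only [Finset.mem_range] at hk
          omega
        rw [hPdef]
        simp only []
        rw [he'def]
        simp only []
        rw [shift_eq_zero_of_lt hnk]
        ring
      have h10 : HasSum (fun k => P (k, n)) (∑ k ∈ Finset.range (n + 1), P (k, n)) :=
        hasSum_sum_of_ne_finset_zero hvan
      have hval : ∑ k ∈ Finset.range (n + 1), P (k, n) = c n * z ^ n := by
        rw [hcdef]
        simp only []
        rw [Finset.sum_mul]
        apply Finset.sum_congr rfl
        intro k _
        rw [hPdef]
        simp only []
        ring
      rwa [hval] at h10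
    exact HasSum.prod_fiberwise hQs hfib2
  -- identification of the coefficients of f
  have hcofWh : CoeffsOn (1/2 : ℝ) f (conv w c) := by
    have h8 : CoeffsOn (1/2 : ℝ) (fun z => W z * g (ω z)) (conv w c) :=
      (hcoW.mono (by norm_num)).mul hcoh
    apply h8.congr
    intro z hz
    exact (hq z (by linarith)).symm
  have hac : a = conv w c :=
    (hcof.mono (by norm_num : (1/2:ℝ) ≤ 1)).unique hcofWh (by norm_num) (by norm_num)
  -- the final estimate for wnorm ψ c
  have hwc : wnorm ψ c ≤ ∑' k, ENNReal.ofReal (‖b k‖ * ψ k) := by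
    have hterm : ∀ n, ENNReal.ofReal (‖c n‖ * ψ n) ≤
        ∑' k, ENNReal.ofReal (‖b k‖ * (‖e' k n‖ * ψ n)) := by
      intro n
      have h9 : ‖c n‖ * ψ n ≤ ∑ k ∈ Finset.range (n + 1), ‖b k‖ * (‖e' k n‖ * ψ n) := by
        calc ‖c n‖ * ψ n
            ≤ (∑ k ∈ Finset.range (n + 1), ‖b k‖ * ‖e' k n‖) * ψ n := by
              apply mul_le_mul_of_nonneg_right _ (hψ0 n)
              refine le_trans (norm_sum_le _ _) (le_of_eq ?_)
              apply Finset.sum_congr rfl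
              intro k _
              rw [norm_mul]
          _ = ∑ k ∈ Finset.range (n + 1), ‖b k‖ * (‖e' k n‖ * ψ n) := by
              rw [Finset.sum_mul]
              apply Finset.sum_congr rfl
              intro k _
              ring
      calc ENNReal.ofReal (‖c n‖ * ψ n)
          ≤ ENNReal.ofReal (∑ k ∈ Finset.range (n + 1), ‖b k‖ * (‖e' k n‖ * ψ n)) :=
            ENNReal.ofReal_le_ofReal h9
        _ = ∑ k ∈ Finset.range (n + 1), ENNReal.ofReal (‖b k‖ * (‖e' k n‖ * ψ n)) :=
            ENNReal.ofReal_sum_of_nonneg (fun k _ =>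
              mul_nonneg (norm_nonneg _) (mul_nonneg (norm_nonneg _) (hψ0 n)))
        _ = ∑' k, ENNReal.ofReal (‖b k‖ * (‖e' k n‖ * ψ n)) := by
            refine (tsum_eq_sum ?_).symm
            intro k hk
            have hnk : n < k := by
              simp only [Finset.mem_range] at hk
              omega
            rw [he'def]
            simp only []
            rw [shift_eq_zero_of_lt hnk]
            simp
    calc wnorm ψ c ≤ ∑' n, ∑' k, ENNReal.ofReal (‖b k‖ * (‖e' k n‖ * ψ n)) :=
          ENNReal.tsum_le_tsum hterm
      _ = ∑' k, ∑' n, ENNReal.ofReal (‖b k‖ * (‖e' k n‖ * ψ n)) := ENNReal.tsum_comm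
      _ ≤ ∑' k, ENNReal.ofReal (‖b k‖ * ψ k) := by
          apply ENNReal.tsum_le_tsum
          intro k
          calc ∑' n, ENNReal.ofReal (‖b k‖ * (‖e' k n‖ * ψ n))
              = ENNReal.ofReal (‖b k‖) * ∑' n, ENNReal.ofReal (‖e' k n‖ * ψ n) := by
                simp_rw [ENNReal.ofReal_mul (norm_nonneg (b k))]
                rw [ENNReal.tsum_mul_left]
            _ = ENNReal.ofReal (‖b k‖) * wnorm ψ (e' k) := rfl
            _ ≤ ENNReal.ofReal (‖b k‖) * ENNReal.ofReal (ψ k) := mul_le_mul_right (he'wn k) _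
            _ = ENNReal.ofReal (‖b k‖ * ψ k) := (ENNReal.ofReal_mul (norm_nonneg _)).symm
  calc ∑' k, ENNReal.ofReal (‖a k‖ * φ k r) = wnorm ψ a := rfl
    _ = wnorm ψ (conv w c) := by rw [hac]
    _ ≤ wnorm ψ w * wnorm ψ c := wnorm_conv hψ0 hψm w c
    _ ≤ 1 * wnorm ψ c := mul_le_mul_left hwnormW _
    _ = wnorm ψ c := one_mul _
    _ ≤ ∑' k, ENNReal.ofReal (‖b k‖ * φ k r) := hwc
end
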